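/- arXiv:1501.04380 — 5 statements merged into one kernel-verified Lean document; each statement's English description precedes it below -/
import Mathlib

section
/- Let m ≥ 1, let d : Fin m → ℕ be a function with d(i) ≥ 1 for all i, and define the degree of a word w ∈ List(Fin m) to be deg(w) = ∑_{i ∈ w} d(i). Let α_1, …, α_n be nonempty words over Fin m that are combinatorially free, i.e. (a) for i ≠ j, α_i is not a contiguous subword (infix) of α_j, and (b) whenever α_i = x₁ ++ y₁ and α_j = x₂ ++ y₂ with x₁, y₁, x₂, y₂ all nonempty words, then y₁ ≠ x₂. For each k ∈ ℕ let c_k be the (finite) number of words w over Fin m of degree k containing none of α_1, …, α_n as a contiguous subword. Then in ℤ⟦X⟧: (1 - ∑_{i=1}^m X^{d(i)} + ∑_{j=1}^n X^{deg(α_j)}) · ∑_{k≥0} c_k X^k = 1. -/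
/-!
Let `F` be the generating function of the words avoiding every `α j`, and count the nonempty
words `v` whose `dropLast` avoids every `α j` in two ways. Splitting off the last letter gives
`(∑ i, X ^ d i) * F`. Otherwise, `v` either avoids every `α j` itself (series `F - 1`), or it is
`p ++ α j` with `p` avoiding: `j` is unique because no `α i` is a suffix of another, and
conversely the absence of overlaps guarantees that `(p ++ α j).dropLast` still avoids every `α i`.
This gives `(∑ i, X ^ d i) * F = F - 1 + (∑ j, X ^ deg (α j)) * F`.
-/

open Function Set PowerSeries

theorem List.exists_straddle_of_infix_append {α : Type*} {b u v : List α} (h : b <:+: u ++ v)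
    (hu : ¬ b <:+: u) (hv : ¬ b <:+: v) :
    ∃ s t, b = s ++ t ∧ s ≠ [] ∧ t ≠ [] ∧ s <:+ u ∧ t <+: v := by
  obtain ⟨x, y, hxy⟩ := h
  rw [List.append_assoc] at hxy
  rcases List.append_eq_append_iff.1 hxy with ⟨s, hu_eq, hs⟩ | ⟨c, _, hc⟩
  · rcases List.append_eq_append_iff.1 hs with ⟨r, hb, _⟩ | ⟨t, hb, ht⟩
    · exact absurd ⟨x, r, by rw [hu_eq, hb]; simp⟩ hu
    · refine ⟨s, t, hb, ?_, ?_, ⟨x, hu_eq.symm⟩, ⟨y, ht.symm⟩⟩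
      · rintro rfl
        exact hv ⟨[], y, by simp [hb, ← ht]⟩
      · rintro rfl
        exact hu ⟨x, [], by simp [hb, ← hu_eq]⟩
  · exact absurd ⟨c, y, by rw [hc]; simp⟩ hv

namespace Anick

variable {σ ι : Type*}

section Degree

variable (d : σ → ℕ)

def deg (w : List σ) : ℕ := (w.map d).sum

variable {d}

@[simp]
theorem deg_append (u v : List σ) : deg d (u ++ v) = deg d u + deg d v := by
  simp [deg]

@[simp]
theorem deg_singleton (i : σ) : deg d [i] = d i := by
  simp [deg]

@[simp]
theorem deg_nil : deg d [] = 0 := rfl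

theorem length_le_deg (hd : ∀ i, 0 < d i) (w : List σ) : w.length ≤ deg d w := by
  induction w with
  | nil => exact le_rfl
  | cons a w ih =>
    rw [← List.singleton_append, deg_append, List.length_append, deg_singleton]
    exact add_le_add (hd a) ih

theorem finite_setOf_deg_eq [Finite σ] (hd : ∀ i, 0 < d i) (k : ℕ) :
    {w : List σ | deg d w = k}.Finite :=
  (List.finite_length_le σ k).subset fun w hw => hw ▸ length_le_deg hd w

end Degree

section WordSeries

variable (d : σ → ℕ)

noncomputable def wordSeries (W : Set (List σ)) : ℤ⟦X⟧ :=
  PowerSeries.mk fun k => ({w | deg d w = k ∧ w ∈ W}.ncard : ℤ)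

variable {d}

theorem wordSeries_iUnion [Finite σ] [Fintype ι] (hd : ∀ i, 0 < d i) {W : ι → Set (List σ)}
    (hW : Pairwise (Disjoint on W)) : wordSeries d (⋃ i, W i) = ∑ i, wordSeries d (W i) := by
  ext k
  have hfiber : {w | deg d w = k ∧ w ∈ ⋃ i, W i} = ⋃ i, {w | deg d w = k ∧ w ∈ W i} := by
    ext w; simp
  rw [map_sum, wordSeries, coeff_mk, hfiber, Set.ncard_iUnion_of_finite, finsum_eq_sum_of_fintype]
  · simp [wordSeries]
  · exact fun i => (finite_setOf_deg_eq hd k).subset fun w hw => hw.1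
  · exact fun i j hij => Set.disjoint_left.2 fun w hi hj => Set.disjoint_left.1 (hW hij) hi.2 hj.2

theorem wordSeries_union [Finite σ] (hd : ∀ i, 0 < d i) {W W' : Set (List σ)}
    (h : Disjoint W W') : wordSeries d (W ∪ W') = wordSeries d W + wordSeries d W' := by
  rw [union_eq_iUnion, wordSeries_iUnion hd]
  · simp
  · intro i j hij
    cases i <;> cases j <;> simp_all [Function.onFun, disjoint_comm]

theorem wordSeries_singleton_nil : wordSeries d {[]} = 1 := by
  ext k
  have hfiber : {w | deg d w = k ∧ w ∈ ({[]} : Set (List σ))} = if k = 0 then {[]} else ∅ := by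
    ext w
    split_ifs with hk <;> simp only [mem_ofPred_eq, mem_singleton_iff] <;> aesop
  rw [wordSeries, coeff_mk, hfiber, coeff_one]
  split_ifs <;> simp

theorem wordSeries_diff_nil [Finite σ] (hd : ∀ i, 0 < d i) {W : Set (List σ)} (hW : [] ∈ W) :
    wordSeries d (W \ {[]}) = wordSeries d W - 1 := by
  conv_rhs => rw [← sdiff_union_of_subset (singleton_subset_iff.2 hW),
    wordSeries_union hd disjoint_sdiff_left, wordSeries_singleton_nil]
  ring

theorem wordSeries_image_append (u : List σ) (W : Set (List σ)) :
    wordSeries d ((· ++ u) '' W) = X ^ deg d u * wordSeries d W := by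
  ext k
  have hfiber : {v | deg d v = k ∧ v ∈ (· ++ u) '' W} =
      (· ++ u) '' {w | deg d w + deg d u = k ∧ w ∈ W} := by
    ext v
    simp only [mem_ofPred_eq, mem_image]
    constructor
    · rintro ⟨rfl, w, hw, rfl⟩; exact ⟨w, ⟨(deg_append w u).symm, hw⟩, rfl⟩
    · rintro ⟨w, ⟨hk, hw⟩, rfl⟩; exact ⟨by rw [deg_append, hk], w, hw, rfl⟩
  rw [coeff_X_pow_mul', wordSeries, coeff_mk, hfiber,
    ncard_image_of_injective _ (List.append_left_injective u)]
  split_ifs with h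
  · simp only [wordSeries, coeff_mk]
    congr 3
    ext w
    exact and_congr_left fun _ => by omega
  · have : {w | deg d w + deg d u = k ∧ w ∈ W} = ∅ :=
      eq_empty_iff_forall_notMem.2 fun w hw => h (by have := hw.1; omega)
    simp [this]

end WordSeries

section Avoidance

def Avoids (α : ι → List σ) (w : List σ) : Prop := ∀ j, ¬ α j <:+: w

structure IsCombinatoriallyFree (α : ι → List σ) : Prop where
  ne_nil : ∀ j, α j ≠ []
  not_infix : ∀ i j, i ≠ j → ¬ α i <:+: α j
  no_overlap : ∀ i j x₁ y₁ x₂ y₂, x₁ ≠ [] → y₁ ≠ [] → x₂ ≠ [] → y₂ ≠ [] →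
    α i = x₁ ++ y₁ → α j = x₂ ++ y₂ → y₁ ≠ x₂

variable {α : ι → List σ}

theorem Avoids.of_infix {u w : List σ} (h : Avoids α w) (hu : u <:+: w) : Avoids α u :=
  fun j hj => h j (hj.trans hu)

theorem avoids_nil (hne : ∀ j, α j ≠ []) : Avoids α [] :=
  fun j hj => hne j (List.eq_nil_of_infix_nil hj)

theorem setOf_dropLast_eq_iUnion (P : List σ → Prop) :
    {v | v ≠ [] ∧ P v.dropLast} = ⋃ i, (· ++ [i]) '' {w | P w} := by
  ext v
  simp only [mem_ofPred_eq, mem_iUnion, mem_image]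
  constructor
  · rintro ⟨hv, hP⟩
    exact ⟨v.getLast hv, v.dropLast, hP, List.dropLast_append_getLast hv⟩
  · rintro ⟨i, w, hw, rfl⟩
    exact ⟨by simp, by rwa [List.dropLast_concat]⟩

theorem pairwise_disjoint_image_append_singleton (W : Set (List σ)) :
    Pairwise (Disjoint on fun i : σ => (· ++ [i]) '' W) := by
  intro i i' hii'
  refine Set.disjoint_left.2 ?_
  rintro _ ⟨w, -, rfl⟩ ⟨w', -, heq⟩
  exact hii' (List.singleton_inj.1 (List.append_inj' heq rfl).2).symm

theorem setOf_dropLast_avoids_eq_union (hne : ∀ j, α j ≠ []) :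
    {v | v ≠ [] ∧ Avoids α v.dropLast} =
      {w | Avoids α w} \ {[]} ∪ {v | ¬ Avoids α v ∧ Avoids α v.dropLast} := by
  ext v
  by_cases hv : Avoids α v
  · have : v ≠ [] ↔ v ∉ ({[]} : Set (List σ)) := by simp
    simp [hv, this, hv.of_infix (List.dropLast_prefix v).isInfix]
  · have : v ≠ [] := by rintro rfl; exact hv (avoids_nil hne)
    simp [hv, this]

theorem avoids_dropLast_append (hα : IsCombinatoriallyFree α) {p : List σ} (hp : Avoids α p)
    (j : ι) : Avoids α (p ++ α j).dropLast := by
  rw [List.dropLast_append_of_ne_nil (hα.ne_nil j)]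
  intro i hi
  by_cases hin : α i <:+: (α j).dropLast
  · have hij : α i <:+: α j := hin.trans (List.dropLast_prefix (α j)).isInfix
    rcases eq_or_ne i j with rfl | hij'
    · have := hin.length_le
      have := List.length_pos_iff.2 (hα.ne_nil i)
      simp only [List.length_dropLast] at *
      omega
    · exact hα.not_infix i j hij' hij
  · obtain ⟨s, t, hst, hs, ht, -, r, hr⟩ := List.exists_straddle_of_infix_append hi (hp i) hin
    -- `t` is a proper prefix of `α j`, since it is a prefix of `(α j).dropLast`
    have hj : α j = t ++ (r ++ [(α j).getLast (hα.ne_nil j)]) := by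
      rw [← List.append_assoc, hr, List.dropLast_append_getLast]
    exact hα.no_overlap i j s t t _ hs ht ht (by simp) hst hj rfl

theorem exists_append_of_not_avoids (hne : ∀ j, α j ≠ []) {v : List σ} (hv : ¬ Avoids α v)
    (hv' : Avoids α v.dropLast) : ∃ j p, Avoids α p ∧ p ++ α j = v := by
  obtain ⟨j, x, y, hxy⟩ : ∃ j, α j <:+: v := by simpa [Avoids] using hv
  obtain rfl : y = [] := by
    rcases List.eq_nil_or_concat y with rfl | ⟨y', b, rfl⟩
    · rfl
    · refine absurd ⟨x, y', ?_⟩ (hv' j)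
      rw [← hxy, List.concat_eq_append, ← List.append_assoc, List.dropLast_concat]
  rw [List.append_nil] at hxy
  refine ⟨j, x, hv'.of_infix ?_, hxy⟩
  rw [← hxy, List.dropLast_append_of_ne_nil (hne j)]
  exact List.infix_append [] x _

theorem setOf_not_avoids_eq_iUnion (hα : IsCombinatoriallyFree α) :
    {v | ¬ Avoids α v ∧ Avoids α v.dropLast} = ⋃ j, (· ++ α j) '' {p | Avoids α p} := by
  ext v
  simp only [mem_ofPred_eq, mem_iUnion, mem_image]
  constructor
  · rintro ⟨hv, hv'⟩
    obtain ⟨j, p, hp, rfl⟩ := exists_append_of_not_avoids hα.ne_nil hv hv'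
    exact ⟨j, p, hp, rfl⟩
  · rintro ⟨j, p, hp, rfl⟩
    exact ⟨fun h => h j (List.suffix_append p (α j)).isInfix, avoids_dropLast_append hα hp j⟩

theorem pairwise_disjoint_image_append (hα : IsCombinatoriallyFree α) (W : Set (List σ)) :
    Pairwise (Disjoint on fun j => (· ++ α j) '' W) := by
  intro i j hij
  refine Set.disjoint_left.2 ?_
  rintro _ ⟨p, -, rfl⟩ ⟨q, -, heq : q ++ α j = p ++ α i⟩
  rcases List.suffix_or_suffix_of_suffix (heq ▸ List.suffix_append q (α j))
      (List.suffix_append p (α i)) with h | h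
  · exact hα.not_infix j i hij.symm h.isInfix
  · exact hα.not_infix i j hij h.isInfix

end Avoidance

theorem wordSeries_avoids_mul [Fintype σ] [Fintype ι] {d : σ → ℕ} (hd : ∀ i, 0 < d i)
    {α : ι → List σ} (hα : IsCombinatoriallyFree α) :
    (1 - ∑ i, X ^ d i + ∑ j, X ^ deg d (α j)) * wordSeries d {w | Avoids α w} = 1 := by
  set F := wordSeries d {w | Avoids α w}
  have hcount : (∑ i, X ^ d i) * F = F - 1 + (∑ j, X ^ deg d (α j)) * F :=
    calc (∑ i, X ^ d i) * F
        = wordSeries d {v | v ≠ [] ∧ Avoids α v.dropLast} := by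
          rw [setOf_dropLast_eq_iUnion, wordSeries_iUnion hd
            (pairwise_disjoint_image_append_singleton _), Finset.sum_mul]
          simp [wordSeries_image_append, F]
      _ = wordSeries d ({w | Avoids α w} \ {[]})
            + wordSeries d {v | ¬ Avoids α v ∧ Avoids α v.dropLast} := by
          rw [setOf_dropLast_avoids_eq_union hα.ne_nil, wordSeries_union hd]
          exact Set.disjoint_left.2 fun v hv hv' => hv'.1 hv.1
      _ = F - 1 + (∑ j, X ^ deg d (α j)) * F := by
          rw [wordSeries_diff_nil hd (avoids_nil hα.ne_nil), setOf_not_avoids_eq_iUnion hα,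
            wordSeries_iUnion hd (pairwise_disjoint_image_append hα _), Finset.sum_mul]
          simp [wordSeries_image_append, F]
  linear_combination (-1 : ℤ⟦X⟧) * hcount

end Anick

theorem stmt_2_general (m : ℕ) (d : Fin m → ℕ) (hd : ∀ i, 1 ≤ d i)
    (n : ℕ) (α : Fin n → List (Fin m)) (hne : ∀ j, α j ≠ [])
    (ha : ∀ i j, i ≠ j → ¬ (α i <:+: α j))
    (hb : ∀ i j : Fin n, ∀ x₁ y₁ x₂ y₂ : List (Fin m),
      x₁ ≠ [] → y₁ ≠ [] → x₂ ≠ [] → y₂ ≠ [] →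
      α i = x₁ ++ y₁ → α j = x₂ ++ y₂ → y₁ ≠ x₂) :
    (1 - ∑ i : Fin m, (PowerSeries.X : PowerSeries ℤ) ^ d i
        + ∑ j : Fin n, (PowerSeries.X : PowerSeries ℤ) ^ ((α j).map d).sum) *
      PowerSeries.mk (fun k =>
        ({w : List (Fin m) | (w.map d).sum = k ∧ ∀ j, ¬ (α j <:+: w)}.ncard : ℤ)) = 1 :=
  Anick.wordSeries_avoids_mul hd ⟨hne, ha, hb⟩

/-- Anick's Hilbert series identity for the quotient of a free associative algebra on
generators of degrees `d i` by the ideal generated by a combinatorially free set of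
monomials `α 0, …, α (n-1)`. -/
theorem stmt_2 (m : ℕ) (hm : 1 ≤ m) (d : Fin m → ℕ) (hd : ∀ i, 1 ≤ d i)
    (n : ℕ) (α : Fin n → List (Fin m)) (hne : ∀ j, α j ≠ [])
    (ha : ∀ i j, i ≠ j → ¬ (α i <:+: α j))
    (hb : ∀ i j : Fin n, ∀ x₁ y₁ x₂ y₂ : List (Fin m),
      x₁ ≠ [] → y₁ ≠ [] → x₂ ≠ [] → y₂ ≠ [] →
      α i = x₁ ++ y₁ → α j = x₂ ++ y₂ → y₁ ≠ x₂) :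
    (1 - ∑ i : Fin m, (PowerSeries.X : PowerSeries ℤ) ^ d i
        + ∑ j : Fin n, (PowerSeries.X : PowerSeries ℤ) ^ ((α j).map d).sum) *
      PowerSeries.mk (fun k =>
        ({w : List (Fin m) | (w.map d).sum = k ∧ ∀ j, ¬ (α j <:+: w)}.ncard : ℤ)) = 1 :=
  stmt_2_general m d hd n α hne ha hb
end

section
/- Let M be a Coxeter matrix on a finite set S and suppose the associated Coxeter group W = W(M) is infinite. For i ∈ S and w ∈ W, say that i is a left descent of w if ℓ(s_i w) < ℓ(w). Then for every k ∈ ℕ: ∑_{I ⊆ S} (-1)^{|I|} · #{ w ∈ W : ℓ(w) = k and no i ∈ I is a left descent of w } = 0. (This is the coefficient form of Steinberg's identity ∑_{I ⊆ S} (-1)^{|I|} W(t)/W_I(t) = 0, where W_I(t) is the Poincaré series of the standard parabolic subgroup W_I and W(t)/W_I(t) is the generating function counting the minimal-length coset representatives of W_I in W, these being exactly the elements with no left descent in I.) -/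
/-!
Exchanging the two sums, the contribution of a fixed `w` is `∑_{I ⊆ A(w)} (-1)^|I|`, where
`A(w)` is the set of simple reflections that are not left descents of `w`; it vanishes as soon
as `A(w)` is nonempty. If `A(w)` were empty, then `w⁻¹` would have every simple reflection as a
right descent, and the lifting property of the Bruhat order would put every element of `W` below
`w⁻¹`, bounding all lengths by `ℓ(w)`; but there are only finitely many elements of bounded
length while `W` is infinite.

The lifting property rests on the exchange property in the form: for `t ≠ s`, `t` is a right
inversion of `w s` iff `s t s` is one of `w`. This comes from the reflection cocycle of
Björner–Brenti (§1.4): `W` acts on `W × ZMod 2` with `s_i` acting by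
`(t, ε) ↦ (s_i t s_i, ε + [t = s_i])`, and the parity `reflCocycle w t` picked up by `w` counts
the occurrences of `t` in the right inversion sequence of any word for `w`.
-/

lemma indicator_singleton_conj {G R : Type*} [Group G] [One R] [Zero R] (p a t : G) :
    ({a} : Set G).indicator (1 : G → R) (p * t * p⁻¹) =
      ({p⁻¹ * a * p} : Set G).indicator 1 t := by
  have : p * t * p⁻¹ = a ↔ t = p⁻¹ * a * p := by constructor <;> rintro rfl <;> group
  classical
  simp only [Set.indicator_apply, Set.mem_singleton_iff, Pi.one_apply, this]

namespace CoxeterSystem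

variable {B W : Type*} [Group W] {M : CoxeterMatrix B} (cs : CoxeterSystem M W)

local prefix:100 "s " => cs.simple
local prefix:100 "π " => cs.wordProd
local prefix:100 "ℓ " => cs.length

noncomputable def flipPerm (i : B) : Equiv.Perm (W × ZMod 2) :=
  Function.Involutive.toPerm
    (fun x ↦ (s i * x.1 * (s i)⁻¹, x.2 + ({s i} : Set W).indicator 1 x.1))
    fun ⟨t, ε⟩ ↦ by
      dsimp only
      rw [indicator_singleton_conj, inv_mul_cancel, one_mul, add_assoc, CharTwo.add_self_eq_zero,
        add_zero, cs.inv_simple, mul_assoc, cs.simple_mul_simple_cancel_right,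
        cs.simple_mul_simple_cancel_left]

lemma flipPerm_apply (i : B) (t : W) (ε : ZMod 2) :
    cs.flipPerm i (t, ε) = (s i * t * (s i)⁻¹, ε + ({s i} : Set W).indicator 1 t) := rfl

lemma flipPerm_mul_pow_apply (i j : B) (k : ℕ) (t : W) (ε : ZMod 2) :
    ((cs.flipPerm i * cs.flipPerm j) ^ k) (t, ε) =
      ((s i * s j) ^ k * t * ((s i * s j) ^ k)⁻¹,
        ε + ∑ r ∈ Finset.range (2 * k), ({(s j * s i) ^ r * s j} : Set W).indicator 1 t) := by
  induction k with
  | zero => simp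
  | succ k ih =>
    have hinv : ((s i * s j) ^ k)⁻¹ = (s j * s i) ^ k := by
      rw [← inv_pow, mul_inv_rev, cs.inv_simple, cs.inv_simple]
    have heven : (s j * s i) ^ k * s j * (s i * s j) ^ k = (s j * s i) ^ (2 * k) * s j := by
      rw [mul_assoc, ← mul_pow_mul, ← mul_assoc, ← pow_add, two_mul]
    have hodd : (s j * s i) ^ k * ((s j)⁻¹ * s i * s j) * (s i * s j) ^ k =
        (s j * s i) ^ (2 * k + 1) * s j := by
      rw [cs.inv_simple, show (s j * s i) ^ k * (s j * s i * s j) * (s i * s j) ^ k =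
        (s j * s i) ^ k * (s j * s i) * (s j * (s i * s j) ^ k) by simp only [mul_assoc],
        ← mul_pow_mul, ← pow_succ, ← mul_assoc, ← pow_add]
      ring_nf
    rw [pow_succ', Equiv.Perm.mul_apply, ih, Equiv.Perm.mul_apply, flipPerm_apply,
      flipPerm_apply, Prod.mk.injEq]
    constructor
    · simp only [pow_succ', mul_inv_rev, mul_assoc]
    · rw [show 2 * (k + 1) = 2 * k + 1 + 1 by ring, Finset.sum_range_succ, Finset.sum_range_succ,
        indicator_singleton_conj, indicator_singleton_conj, indicator_singleton_conj, hinv, heven,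
        hodd]
      dsimp only
      abel

lemma isLiftable_flipPerm : M.IsLiftable cs.flipPerm := by
  intro i j
  ext ⟨t, ε⟩ : 1
  -- the summand is `M i j`-periodic in `r`, so each term occurs twice
  rw [flipPerm_mul_pow_apply, cs.simple_mul_simple_pow, two_mul, Finset.sum_range_add]
  simp only [pow_add, cs.simple_mul_simple_pow', one_mul, CharTwo.add_self_eq_zero]
  simp

noncomputable def flipRep : W →* Equiv.Perm (W × ZMod 2) :=
  cs.lift ⟨cs.flipPerm, cs.isLiftable_flipPerm⟩

noncomputable def reflCocycle (w t : W) : ZMod 2 := (cs.flipRep w (t, 0)).2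

lemma flipRep_simple (i : B) : cs.flipRep (s i) = cs.flipPerm i :=
  cs.lift_apply_simple cs.isLiftable_flipPerm i

lemma flipRep_apply (w t : W) (ε : ZMod 2) :
    cs.flipRep w (t, ε) = (w * t * w⁻¹, ε + cs.reflCocycle w t) := by
  induction w using cs.simple_induction_left generalizing t ε with
  | one => simp [reflCocycle]
  | mul_simple_left w i ih =>
    rw [reflCocycle, map_mul, Equiv.Perm.mul_apply, Equiv.Perm.mul_apply, ih, ih, flipRep_simple,
      flipPerm_apply, flipPerm_apply]
    simp only [mul_inv_rev, mul_assoc, zero_add, add_assoc]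

lemma reflCocycle_mul (x y t : W) :
    cs.reflCocycle (x * y) t = cs.reflCocycle y t + cs.reflCocycle x (y * t * y⁻¹) := by
  rw [reflCocycle, map_mul, Equiv.Perm.mul_apply, flipRep_apply, flipRep_apply, zero_add]

lemma reflCocycle_one (t : W) : cs.reflCocycle 1 t = 0 := by
  simp [reflCocycle]

lemma reflCocycle_simple (i : B) (t : W) :
    cs.reflCocycle (s i) t = ({s i} : Set W).indicator 1 t := by
  rw [reflCocycle, flipRep_simple, flipPerm_apply, zero_add]

lemma reflCocycle_wordProd [DecidableEq W] (ω : List B) (t : W) :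
    cs.reflCocycle (π ω) t = ((cs.rightInvSeq ω).count t : ZMod 2) := by
  induction ω using List.reverseRecOn generalizing t with
  | nil => simp [reflCocycle_one]
  | append_singleton ω i ih =>
    rw [← List.concat_eq_append, cs.wordProd_concat, reflCocycle_mul, reflCocycle_simple, ih,
      cs.rightInvSeq_concat, List.concat_eq_append, List.count_append, Nat.cast_add, add_comm]
    have hconj : t = MulAut.conj (s i) (s i * t * (s i)⁻¹) := by
      simp [cs.inv_simple, mul_assoc]
    congr 1
    · conv_rhs => rw [hconj]
      rw [List.count_map_of_injective _ _ (MulAut.conj (s i)).injective]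
    · rcases eq_or_ne t (s i) with rfl | h
      · simp
      · simp [h, h.symm]

lemma isRightInversion_of_reflCocycle_eq_one {w t : W} (h : cs.reflCocycle w t = 1) :
    cs.IsRightInversion w t := by
  classical
  obtain ⟨ω, hω, rfl⟩ := cs.exists_isReduced w
  rw [reflCocycle_wordProd] at h
  have hmem : t ∈ cs.rightInvSeq ω :=
    List.count_pos_iff.mp (Nat.pos_of_ne_zero fun h0 ↦ by simp [h0] at h)
  exact cs.isRightInversion_of_mem_rightInvSeq hω hmem

lemma reflCocycle_inv (w t : W) : cs.reflCocycle w⁻¹ t = cs.reflCocycle w (w⁻¹ * t * w) := by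
  have h := cs.reflCocycle_mul w w⁻¹ t
  rwa [mul_inv_cancel, reflCocycle_one, inv_inv, eq_comm, CharTwo.add_eq_zero] at h

lemma reflCocycle_conj (u x y : W) :
    cs.reflCocycle (u * x * u⁻¹) (u * y * u⁻¹) =
      cs.reflCocycle x y + cs.reflCocycle u y + cs.reflCocycle u (x * y * x⁻¹) := by
  rw [reflCocycle_mul, reflCocycle_inv, reflCocycle_mul]
  simp only [mul_assoc, inv_mul_cancel_left, inv_mul_cancel, mul_inv_cancel, mul_one]
  abel

lemma reflCocycle_self {t : W} (ht : cs.IsReflection t) : cs.reflCocycle t t = 1 := by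
  obtain ⟨u, i, rfl⟩ := ht
  rw [reflCocycle_conj, mul_inv_cancel_right, add_assoc, CharTwo.add_self_eq_zero, add_zero,
    reflCocycle_simple, Set.indicator_of_mem (Set.mem_singleton _), Pi.one_apply]

lemma reflCocycle_eq_one_iff {w t : W} (ht : cs.IsReflection t) :
    cs.reflCocycle w t = 1 ↔ ℓ (w * t) < ℓ w := by
  refine ⟨fun h ↦ (cs.isRightInversion_of_reflCocycle_eq_one h).2, fun hlt ↦ ?_⟩
  refine ((by decide : ∀ x : ZMod 2, x = 0 ∨ x = 1) _).resolve_left fun h0 ↦ ?_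
  have h1 : cs.reflCocycle (w * t) t = 1 := by
    rw [reflCocycle_mul, mul_inv_cancel_right, h0, add_zero, cs.reflCocycle_self ht]
  have h2 := (cs.isRightInversion_of_reflCocycle_eq_one h1).2
  rw [mul_assoc, ht.mul_self, mul_one] at h2
  omega

lemma isRightInversion_iff_reflCocycle {w t : W} :
    cs.IsRightInversion w t ↔ cs.IsReflection t ∧ cs.reflCocycle w t = 1 :=
  and_congr_right fun ht ↦ (cs.reflCocycle_eq_one_iff ht).symm

lemma isRightInversion_mul_simple_iff {w t : W} {i : B} (h : t ≠ s i) :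
    cs.IsRightInversion (w * s i) t ↔ cs.IsRightInversion w (s i * t * s i) := by
  rw [isRightInversion_iff_reflCocycle, isRightInversion_iff_reflCocycle, reflCocycle_mul,
    reflCocycle_simple, Set.indicator_of_notMem (Set.notMem_singleton_iff.mpr h), zero_add,
    cs.inv_simple]
  exact and_congr_left'
    (by simpa only [cs.inv_simple] using (cs.isReflection_conj_iff (s i) t).symm)

def BruhatStep (a b : W) : Prop := ∃ t, cs.IsRightInversion b t ∧ b * t = a

def BruhatLE : W → W → Prop := Relation.ReflTransGen cs.BruhatStep

variable {cs}

lemma BruhatStep.length_lt {a b : W} (h : cs.BruhatStep a b) : ℓ a < ℓ b := by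
  obtain ⟨t, ⟨-, hlt⟩, rfl⟩ := h
  exact hlt

lemma BruhatLE.length_le {a b : W} (h : cs.BruhatLE a b) : ℓ a ≤ ℓ b := by
  induction h with
  | refl => rfl
  | tail _ hstep ih => exact ih.trans hstep.length_lt.le

lemma bruhatStep_mul_simple_self {w : W} {i : B} (h : cs.IsRightDescent w i) :
    cs.BruhatStep (w * s i) w :=
  ⟨s i, ⟨cs.isReflection_simple i, h⟩, rfl⟩

lemma one_bruhatLE (w : W) : cs.BruhatLE 1 w := by
  induction hn : ℓ w using Nat.strong_induction_on generalizing w with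
  | _ n ih =>
    obtain rfl | hw := eq_or_ne w 1
    · exact .refl
    obtain ⟨i, hi⟩ := cs.exists_rightDescent_of_ne_one hw
    exact (ih _ (hn ▸ hi) _ rfl).tail (bruhatStep_mul_simple_self hi)

lemma BruhatStep.mul_simple {a b : W} {i : B} (h : cs.BruhatStep a b)
    (ha : ¬cs.IsRightDescent a i) (hb : ¬cs.IsRightDescent b i) :
    cs.BruhatStep (a * s i) (b * s i) := by
  obtain ⟨t, ⟨ht, hlt⟩, rfl⟩ := h
  rw [cs.not_isRightDescent_iff] at ha hb
  have hconj : b * s i * (s i * t * s i) = b * t * s i := by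
    simp only [mul_assoc, cs.simple_mul_simple_cancel_left]
  refine ⟨s i * t * s i, ⟨?_, ?_⟩, hconj⟩
  · simpa only [cs.inv_simple] using ht.conj (s i)
  · rw [hconj]
    omega

lemma BruhatStep.bruhatLE_mul_simple {a b : W} {i : B} (h : cs.BruhatStep a b)
    (hb : cs.IsRightDescent b i) : cs.BruhatLE (a * s i) b := by
  obtain ⟨t, hbt, rfl⟩ := h
  obtain rfl | hti := eq_or_ne t (s i)
  · rw [cs.simple_mul_simple_cancel_right]
    exact .refl
  rw [← cs.simple_mul_simple_cancel_right (w := b) i, cs.isRightInversion_mul_simple_iff hti]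
    at hbt
  refine Relation.ReflTransGen.single ⟨_, hbt, ?_⟩ |>.tail (bruhatStep_mul_simple_self hb)
  simp only [mul_assoc, cs.simple_mul_simple_cancel_left]

lemma BruhatLE.mul_simple_of_isRightDescent {x w : W} {i : B} (h : cs.BruhatLE x w)
    (hw : cs.IsRightDescent w i) : cs.BruhatLE (x * s i) w := by
  induction h using Relation.ReflTransGen.head_induction_on with
  | refl => exact .single (bruhatStep_mul_simple_self hw)
  | @head x c hxc hcw ih =>
    by_cases hx : cs.IsRightDescent x i
    · exact .head (bruhatStep_mul_simple_self hx) (.head hxc hcw)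
    by_cases hc : cs.IsRightDescent c i
    · exact (hxc.bruhatLE_mul_simple hc).trans hcw
    · exact .head (hxc.mul_simple hx hc) ih

lemma bruhatLE_of_forall_isRightDescent {w : W} (hw : ∀ i, cs.IsRightDescent w i) (u : W) :
    cs.BruhatLE u w := by
  induction u using cs.simple_induction_right with
  | one => exact one_bruhatLE w
  | mul_simple_right u i ih => exact ih.mul_simple_of_isRightDescent (hw i)

variable (cs) in
lemma finite_setOf_length_le [Finite B] (n : ℕ) : {w : W | ℓ w ≤ n}.Finite :=
  ((List.finite_length_le B n).image cs.wordProd).subset fun w hw ↦ by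
    obtain ⟨ω, hω, rfl⟩ := cs.exists_isReduced w
    exact ⟨ω, by simpa [hω.eq] using hw, rfl⟩

variable (cs) in
lemma exists_not_isLeftDescent [Finite B] [Infinite W] (w : W) :
    ∃ i, ¬cs.IsLeftDescent w i := by
  by_contra! h
  have hw : ∀ i, cs.IsRightDescent w⁻¹ i := fun i ↦ cs.isRightDescent_inv_iff.mpr (h i)
  exact Set.infinite_univ <| (cs.finite_setOf_length_le (ℓ w⁻¹)).subset fun u _ ↦
    (bruhatLE_of_forall_isRightDescent hw u).length_le

end CoxeterSystem

theorem Finset.sum_neg_one_pow_card_mul_card_filter_forall {ι α : Type*} [Fintype ι]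
    (s : Finset α) (p : α → ι → Prop) [∀ a i, Decidable (p a i)]
    (h : ∀ a ∈ s, ∃ i, p a i) :
    ∑ I : Finset ι, (-1 : ℤ) ^ I.card * (s.filter fun a ↦ ∀ i ∈ I, p a i).card = 0 := by
  classical
  simp_rw [Finset.card_filter, Nat.cast_sum, Finset.mul_sum]
  rw [Finset.sum_comm]
  refine Finset.sum_eq_zero fun a ha ↦ ?_
  obtain ⟨i, hi⟩ := h a ha
  have hne : (Finset.univ.filter (p a)).Nonempty := ⟨i, by simpa using hi⟩
  rw [← Finset.sum_powerset_neg_one_pow_card_of_nonempty hne]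
  simp only [Nat.cast_ite, Nat.cast_one, Nat.cast_zero, mul_ite, mul_one, mul_zero]
  rw [← Finset.sum_filter]
  congr 1
  ext I
  simp [Finset.subset_iff]

theorem Set.Finite.natCard_subtype_and {α : Type*} {P Q : α → Prop} [DecidablePred Q]
    (hP : {a | P a}.Finite) : Nat.card {a // P a ∧ Q a} = (hP.toFinset.filter Q).card := by
  rw [← Nat.card_eq_finsetCard]
  exact Nat.card_congr (Equiv.subtypeEquivRight fun a ↦ by simp)

/-- Coefficient form of Steinberg's identity `∑_{I ⊆ S} (-1)^{|I|} W(t)/W_I(t) = 0` for an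
infinite Coxeter group `W` with finite generating set `S`: for every `k`, the signed sum over
all subsets `I ⊆ S` of the number of elements of length `k` having no left descent in `I`
vanishes. -/
theorem stmt_3 {B : Type*} [Fintype B] (M : CoxeterMatrix B)
    (hW : Infinite M.Group) (k : ℕ) :
    ∑ I : Finset B, (-1 : ℤ) ^ I.card *
      (Nat.card {w : M.Group // M.toCoxeterSystem.length w = k ∧
        ∀ i ∈ I, ¬ M.toCoxeterSystem.length (M.toCoxeterSystem.simple i * w) <
          M.toCoxeterSystem.length w} : ℤ) = 0 := by
  have hfin : {w | M.toCoxeterSystem.length w = k}.Finite :=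
    (M.toCoxeterSystem.finite_setOf_length_le k).subset fun w hw ↦ le_of_eq hw
  simp only [hfin.natCard_subtype_and]
  exact Finset.sum_neg_one_pow_card_mul_card_filter_forall _ _
    fun w _ ↦ M.toCoxeterSystem.exists_not_isLeftDescent w
end

section
/- Let M be the Coxeter matrix on the set {1, 2, 3} with M(1,2) = ∞ (encoded as 0), M(2,3) = ∞ (encoded as 0), and M(1,3) = 2. Then the Poincaré series W(t) = ∑_{k≥0} c_k t^k of the Coxeter group W(M) satisfies (1 − t − t²) · W(t) = (1+t)² in ℤ⟦t⟧. -/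
open PowerSeries

/-- The Coxeter matrix on {1, …, 3} with M(1,2) = ∞, M(2,3) = ∞ (encoded as 0) and M(1,3) = 2. -/
def cox13 : CoxeterMatrix (Fin 3) where
  M := !![1,0,2; 0,1,0; 2,0,1]
  off_diagonal := by
    intro i i' h
    fin_cases i <;> fin_cases i' <;> simp_all

/-- The Poincaré series `W(t) = ∑ₖ cₖ tᵏ` of the Coxeter group of `cox13`, where `cₖ` is the
number of elements of length `k`. -/
noncomputable def poincare13 : PowerSeries ℤ :=
  PowerSeries.mk fun k =>
    (Nat.card {w : cox13.Group // cox13.toCoxeterSystem.length w = k} : ℤ)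

/-!
Since `M 0 2 = 2` while `s 1` is free, `W` is the free product of the Klein four-group
`⟨s 0, s 2⟩` with `⟨s 1⟩ ≅ ℤ/2`. Every element is therefore written uniquely as an alternating
word in the nontrivial Klein elements `s 0`, `s 2`, `s 0 s 2` (of lengths 1, 1, 2) and in `s 1`,
and its length is the total length of that word. Uniqueness and the length formula come from
letting `W` act on such words, the action being lifted from the generators through the Coxeter
presentation. If `K` counts the words that do not begin with `s 1`, then
`K = 1 + (2t + t²)(1 + tK)` and `W(t) = (1 + t) K`, and these two relations give
`(1 - t - t²) W(t) = (1 + t)²`.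
-/

section FiberCardSeries

open Finset

variable {α β : Type*}

-- Only meaningful when the fibres of `w` are finite: `Nat.card` of an infinite type is `0`.
noncomputable def fiberCardSeries (w : α → ℕ) : ℤ⟦X⟧ :=
  mk fun k => Nat.card {a // w a = k}

@[simp]
theorem coeff_fiberCardSeries (w : α → ℕ) (k : ℕ) :
    coeff k (fiberCardSeries w) = Nat.card {a // w a = k} :=
  coeff_mk _ _

theorem fiberCardSeries_congr {v : α → ℕ} {w : β → ℕ} (e : α ≃ β) (h : ∀ a, w (e a) = v a) :
    fiberCardSeries v = fiberCardSeries w := by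
  ext k
  simp only [coeff_fiberCardSeries]
  exact congrArg _ (Nat.card_congr (e.subtypeEquiv fun a => by rw [h]))

theorem fiberCardSeries_eq_sum [Fintype α] (w : α → ℕ) :
    fiberCardSeries w = ∑ a, X ^ w a := by
  classical
  ext k
  simp [coeff_X_pow, Nat.card_eq_fintype_card, Fintype.card_subtype, Finset.sum_boole, eq_comm]

theorem fiberCardSeries_add_const (w : α → ℕ) (n : ℕ) :
    fiberCardSeries (fun a => w a + n) = X ^ n * fiberCardSeries w := by
  ext k
  rw [coeff_X_pow_mul', coeff_fiberCardSeries]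
  split_ifs with hnk
  · rw [coeff_fiberCardSeries]
    exact congrArg _ (Nat.card_congr (Equiv.subtypeEquivRight fun a => by omega))
  · have : IsEmpty {a // w a + n = k} := ⟨fun a => hnk (by omega)⟩
    simp

theorem finite_fiber_add_const {w : α → ℕ} (hw : ∀ k, Finite {a // w a = k}) (n k : ℕ) :
    Finite {a // w a + n = k} :=
  have := hw (k - n)
  .of_injective (fun a => (⟨a.1, by have := a.2; omega⟩ : {a // w a = k - n}))
    fun _ _ h => Subtype.ext (congrArg Subtype.val h :)

def fiberSumEquiv (v : α → ℕ) (w : β → ℕ) (k : ℕ) :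
    {x // Sum.elim v w x = k} ≃ {a // v a = k} ⊕ {b // w b = k} :=
  Equiv.subtypeSum

theorem finite_fiber_sumElim {v : α → ℕ} {w : β → ℕ} (hv : ∀ k, Finite {a // v a = k})
    (hw : ∀ k, Finite {b // w b = k}) (k : ℕ) : Finite {x // Sum.elim v w x = k} :=
  have := hv k
  have := hw k
  .of_equiv _ (fiberSumEquiv v w k).symm

theorem fiberCardSeries_sumElim {v : α → ℕ} {w : β → ℕ} (hv : ∀ k, Finite {a // v a = k})
    (hw : ∀ k, Finite {b // w b = k}) :
    fiberCardSeries (Sum.elim v w) = fiberCardSeries v + fiberCardSeries w := by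
  ext k
  have := hv k
  have := hw k
  rw [map_add, coeff_fiberCardSeries, Nat.card_congr (fiberSumEquiv v w k), Nat.card_sum,
    Nat.cast_add, coeff_fiberCardSeries, coeff_fiberCardSeries]

def fiberProdEquiv (v : α → ℕ) (w : β → ℕ) (k : ℕ) :
    {p : α × β // v p.1 + w p.2 = k} ≃
      Σ ij : antidiagonal k, {a // v a = ij.1.1} × {b // w b = ij.1.2} where
  toFun p := ⟨⟨(v p.1.1, w p.1.2), mem_antidiagonal.2 p.2⟩, ⟨p.1.1, rfl⟩, ⟨p.1.2, rfl⟩⟩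
  invFun q := ⟨(q.2.1, q.2.2), by rw [q.2.1.2, q.2.2.2]; exact mem_antidiagonal.1 q.1.2⟩
  left_inv _ := rfl
  right_inv := by
    rintro ⟨⟨⟨i, j⟩, hij⟩, ⟨a, ha⟩, ⟨b, hb⟩⟩
    dsimp only at ha hb
    subst ha hb
    rfl

theorem finite_fiber_prod {v : α → ℕ} {w : β → ℕ} (hv : ∀ k, Finite {a // v a = k})
    (hw : ∀ k, Finite {b // w b = k}) (k : ℕ) : Finite {p : α × β // v p.1 + w p.2 = k} :=
  have (ij : antidiagonal k) : Finite ({a // v a = ij.1.1} × {b // w b = ij.1.2}) :=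
    have := hv ij.1.1
    have := hw ij.1.2
    inferInstance
  .of_equiv _ (fiberProdEquiv v w k).symm

theorem fiberCardSeries_prod {v : α → ℕ} {w : β → ℕ} (hv : ∀ k, Finite {a // v a = k})
    (hw : ∀ k, Finite {b // w b = k}) :
    fiberCardSeries (fun p : α × β => v p.1 + w p.2) = fiberCardSeries v * fiberCardSeries w := by
  ext k
  have (ij : antidiagonal k) : Finite ({a // v a = ij.1.1} × {b // w b = ij.1.2}) :=
    have := hv ij.1.1
    have := hw ij.1.2
    inferInstance
  rw [coeff_fiberCardSeries, Nat.card_congr (fiberProdEquiv v w k), Nat.card_sigma, coeff_mul,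
    ← Finset.sum_coe_sort (antidiagonal k)]
  push_cast [Nat.card_prod, coeff_fiberCardSeries]
  rfl

end FiberCardSeries

theorem CoxeterSystem.finite_length_eq {B W : Type*} [Group W] [Finite B] {M : CoxeterMatrix B}
    (cs : CoxeterSystem M W) (k : ℕ) : Finite {w : W // cs.length w = k} := by
  refine Set.Finite.to_subtype (((List.finite_length_eq B k).image cs.wordProd).subset ?_)
  rintro w (hw : cs.length w = k)
  obtain ⟨ω, hω, rfl⟩ := cs.exists_isReduced w
  exact ⟨ω, hω.eq.symm.trans hw, rfl⟩

namespace Cox13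

abbrev cs : CoxeterSystem cox13 cox13.Group := cox13.toCoxeterSystem

theorem simple_two_mul_simple_zero : cs.simple 2 * cs.simple 0 = cs.simple 0 * cs.simple 2 :=
  have h : (cs.simple 0 * cs.simple 2) ^ 2 = 1 := cs.simple_mul_simple_pow 0 2
  calc cs.simple 2 * cs.simple 0
      = cs.simple 2 * cs.simple 0 * (cs.simple 0 * cs.simple 2 * (cs.simple 0 * cs.simple 2)) := by
        rw [← sq, h, mul_one]
    _ = cs.simple 0 * cs.simple 2 := by simp only [mul_assoc, cs.simple_mul_simple_cancel_left]

theorem simple_two_mul_simple_zero_mul (w : cox13.Group) :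
    cs.simple 2 * (cs.simple 0 * w) = cs.simple 0 * (cs.simple 2 * w) := by
  rw [← mul_assoc, simple_two_mul_simple_zero, mul_assoc]

/-- The nontrivial elements `s 0`, `s 2`, `s 0 * s 2` of the Klein four-group `⟨s 0, s 2⟩`. -/
inductive Syllable
  | s0 | s2 | s02
  deriving DecidableEq

instance : Fintype Syllable := ⟨{.s0, .s2, .s02}, fun x => by cases x <;> simp⟩

namespace Syllable

/-- Multiplication in the Klein four-group, with `none` standing for the identity. -/
def mul : Syllable → Syllable → Option Syllable
  | s0, s0 | s2, s2 | s02, s02 => none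
  | s0, s2 | s2, s0 => some s02
  | s0, s02 | s02, s0 => some s2
  | s2, s02 | s02, s2 => some s0

def weight : Syllable → ℕ
  | s0 | s2 => 1
  | s02 => 2

def toGroup : Syllable → cox13.Group
  | s0 => cs.simple 0
  | s2 => cs.simple 2
  | s02 => cs.simple 0 * cs.simple 2

theorem toGroup_mul_toGroup (g x : Syllable) :
    g.toGroup * x.toGroup = (g.mul x).elim 1 toGroup := by
  cases g <;> cases x <;> simp only [toGroup, mul, Option.elim, mul_assoc,
    simple_two_mul_simple_zero, simple_two_mul_simple_zero_mul, cs.simple_mul_simple_cancel_left,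
    cs.simple_mul_simple_self, mul_one]

theorem length_toGroup_le (x : Syllable) : cs.length x.toGroup ≤ x.weight := by
  cases x
  · exact (cs.length_simple 0).le
  · exact (cs.length_simple 2).le
  · exact (cs.length_mul_le _ _).trans (by rw [cs.length_simple, cs.length_simple]; rfl)

theorem fiberCardSeries_weight : fiberCardSeries weight = 2 * X + X ^ 2 := by
  rw [fiberCardSeries_eq_sum]
  simp [Finset.univ, Fintype.elems, weight]
  ring

end Syllable

/-- Alternating words that do not begin with `s 1`: `cons x w` stands for `x * s 1 * w`. -/
inductive KleinWord
  | nil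
  | last (x : Syllable)
  | cons (x : Syllable) (w : KleinWord)

namespace KleinWord

def weight : KleinWord → ℕ
  | nil => 0
  | last x => x.weight
  | cons x w => x.weight + (w.weight + 1)

def toGroup : KleinWord → cox13.Group
  | nil => 1
  | last x => x.toGroup
  | cons x w => x.toGroup * cs.simple 1 * w.toGroup

theorem length_toGroup_le : ∀ w : KleinWord, cs.length w.toGroup ≤ w.weight
  | nil => cs.length_one.le
  | last x => x.length_toGroup_le
  | cons x w => by
    have := w.length_toGroup_le
    have := x.length_toGroup_le
    have := cs.length_mul_le (x.toGroup * cs.simple 1) w.toGroup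
    have := cs.length_mul_le x.toGroup (cs.simple 1)
    have := cs.length_simple 1
    simp only [toGroup, weight]
    omega

def equivSum : KleinWord ≃ Unit ⊕ Syllable × (Unit ⊕ KleinWord) where
  toFun
    | nil => .inl ()
    | last x => .inr (x, .inl ())
    | cons x w => .inr (x, .inr w)
  invFun
    | .inl () => nil
    | .inr (x, .inl ()) => last x
    | .inr (x, .inr w) => cons x w
  left_inv w := by cases w <;> rfl
  right_inv := by rintro (⟨⟩ | ⟨x, ⟨⟩ | w⟩) <;> rfl

end KleinWord

/-- `(b, w)` stands for `s 1 ^ b * w`; these are all the alternating words. -/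
abbrev NormalForm := Bool × KleinWord

namespace NormalForm

def weight (v : NormalForm) : ℕ := v.1.toNat + v.2.weight

def toGroup (v : NormalForm) : cox13.Group := (bif v.1 then cs.simple 1 else 1) * v.2.toGroup

def act (g : Syllable) : NormalForm → NormalForm
  | (true, w) => (false, .cons g w)
  | (false, .nil) => (false, .last g)
  | (false, .last x) => (false, (g.mul x).elim .nil .last)
  | (false, .cons x w) => (g.mul x).elim (true, w) fun y => (false, .cons y w)

def flip (v : NormalForm) : NormalForm := (!v.1, v.2)

theorem act_involutive (g : Syllable) : Function.Involutive (act g) := by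
  rintro ⟨_ | _, _ | x | ⟨x, w⟩⟩ <;> cases g <;> (try cases x) <;> rfl

theorem act_s0_act_s2 (v : NormalForm) : act .s0 (act .s2 v) = act .s02 v := by
  rcases v with ⟨_ | _, _ | x | ⟨x, w⟩⟩ <;> (try cases x) <;> rfl

theorem act_s2_act_s0 (v : NormalForm) : act .s2 (act .s0 v) = act .s02 v := by
  rcases v with ⟨_ | _, _ | x | ⟨x, w⟩⟩ <;> (try cases x) <;> rfl

theorem flip_involutive : Function.Involutive flip := fun _ => by simp [flip]

theorem toGroup_act (g : Syllable) (v : NormalForm) :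
    (act g v).toGroup = g.toGroup * v.toGroup := by
  rcases v with ⟨_ | _, _ | x | ⟨x, w⟩⟩ <;>
    simp only [act, toGroup, KleinWord.toGroup, cond_true, cond_false, one_mul, mul_one]
  · rw [Syllable.toGroup_mul_toGroup]
    cases g.mul x <;> rfl
  · rw [← mul_assoc, ← mul_assoc, Syllable.toGroup_mul_toGroup]
    cases g.mul x <;>
      simp only [Option.elim, KleinWord.toGroup, cond_true, cond_false, one_mul, mul_assoc]
  all_goals simp only [mul_assoc]

theorem toGroup_flip (v : NormalForm) : v.flip.toGroup = cs.simple 1 * v.toGroup := by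
  rcases v with ⟨_ | _, w⟩ <;>
    simp only [flip, toGroup, Bool.not_true, Bool.not_false, cond_true, cond_false, one_mul,
      ← mul_assoc, cs.simple_mul_simple_self]

theorem weight_act_le (g : Syllable) (v : NormalForm) :
    (act g v).weight ≤ v.weight + g.weight := by
  rcases v with ⟨_ | _, _ | x | ⟨x, w⟩⟩ <;> (try cases x) <;> cases g <;>
    simp [act, weight, KleinWord.weight, Syllable.mul, Syllable.weight] <;> omega

theorem weight_flip_le (v : NormalForm) : v.flip.weight ≤ v.weight + 1 := by
  rcases v with ⟨_ | _, w⟩ <;> simp [flip, weight] <;> omega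

theorem length_toGroup_le (v : NormalForm) : cs.length v.toGroup ≤ v.weight := by
  rcases v with ⟨_ | _, w⟩
  · simpa [toGroup, weight] using w.length_toGroup_le
  · have := w.length_toGroup_le
    have := cs.length_mul_le (cs.simple 1) w.toGroup
    rw [cs.length_simple] at this
    simp only [toGroup, weight, cond_true, Bool.toNat_true]
    omega

def generator : Fin 3 → Equiv.Perm NormalForm :=
  ![(act_involutive .s0).toPerm, flip_involutive.toPerm, (act_involutive .s2).toPerm]

theorem isLiftable_generator : cox13.IsLiftable generator := by
  have hinv (i : Fin 3) : generator i * generator i = 1 := by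
    ext1 v
    fin_cases i
    exacts [act_involutive _ v, flip_involutive v, act_involutive _ v]
  have hs02 : (act_involutive .s02).toPerm ^ 2 = 1 := Equiv.ext (act_involutive .s02)
  have h02 : (generator 0 * generator 2) ^ 2 = 1 :=
    (congrArg (· ^ 2) (Equiv.ext act_s0_act_s2)).trans hs02
  have h20 : (generator 2 * generator 0) ^ 2 = 1 :=
    (congrArg (· ^ 2) (Equiv.ext act_s2_act_s0)).trans hs02
  intro i i'
  fin_cases i <;> fin_cases i'
  all_goals first
    | exact (pow_one _).trans (hinv _)
    | exact pow_zero _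
    | assumption

theorem weight_generator_le (i : Fin 3) (v : NormalForm) :
    (generator i v).weight ≤ v.weight + 1 := by
  fin_cases i
  exacts [weight_act_le .s0 v, weight_flip_le v, weight_act_le .s2 v]

end NormalForm

noncomputable def permAction : cox13.Group →* Equiv.Perm NormalForm :=
  cs.lift ⟨NormalForm.generator, NormalForm.isLiftable_generator⟩

theorem permAction_simple (i : Fin 3) : permAction (cs.simple i) = NormalForm.generator i :=
  cs.lift_apply_simple _ i

theorem toGroup_permAction_apply (w : cox13.Group) (v : NormalForm) :
    (permAction w v).toGroup = w * v.toGroup := by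
  induction w using cs.simple_induction generalizing v with
  | simple i =>
    rw [permAction_simple]
    fin_cases i
    exacts [NormalForm.toGroup_act .s0 v, NormalForm.toGroup_flip v, NormalForm.toGroup_act .s2 v]
  | one => rw [map_one, Equiv.Perm.one_apply, one_mul]
  | mul u w hu hw => rw [map_mul, Equiv.Perm.mul_apply, hu, hw, mul_assoc]

theorem permAction_toGroup (x : Syllable) :
    permAction x.toGroup = (NormalForm.act_involutive x).toPerm := by
  cases x
  · exact permAction_simple 0
  · exact permAction_simple 2
  · rw [Syllable.toGroup, map_mul, permAction_simple, permAction_simple]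
    exact Equiv.ext NormalForm.act_s0_act_s2

noncomputable def normalForm (w : cox13.Group) : NormalForm := permAction w (false, .nil)

theorem toGroup_normalForm (w : cox13.Group) : (normalForm w).toGroup = w := by
  rw [normalForm, toGroup_permAction_apply]
  exact mul_one w

theorem permAction_toGroup_nil :
    ∀ w : KleinWord, permAction w.toGroup (false, .nil) = (false, w)
  | .nil => by rw [KleinWord.toGroup, map_one]; rfl
  | .last x => by rw [KleinWord.toGroup, permAction_toGroup]; rfl
  | .cons x w => by
    rw [KleinWord.toGroup, map_mul, map_mul, Equiv.Perm.mul_apply, Equiv.Perm.mul_apply,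
      permAction_toGroup_nil w, permAction_toGroup, permAction_simple]
    rfl

theorem normalForm_toGroup : ∀ v : NormalForm, normalForm v.toGroup = v
  | (false, w) => by
    rw [normalForm, NormalForm.toGroup, cond_false, one_mul, permAction_toGroup_nil]
  | (true, w) => by
    rw [normalForm, NormalForm.toGroup, cond_true, map_mul, Equiv.Perm.mul_apply,
      permAction_toGroup_nil, permAction_simple]
    rfl

theorem weight_normalForm_wordProd_le :
    ∀ ω : List (Fin 3), (normalForm (cs.wordProd ω)).weight ≤ ω.length
  | [] => by rw [cs.wordProd_nil, normalForm, map_one]; rfl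
  | i :: ω => by
    rw [cs.wordProd_cons, normalForm, map_mul, Equiv.Perm.mul_apply, permAction_simple]
    exact (NormalForm.weight_generator_le i _).trans
      (Nat.succ_le_succ (weight_normalForm_wordProd_le ω))

theorem weight_normalForm (w : cox13.Group) : (normalForm w).weight = cs.length w := by
  refine le_antisymm ?_ ?_
  · obtain ⟨ω, hω, rfl⟩ := cs.exists_isReduced w
    exact hω.eq ▸ weight_normalForm_wordProd_le ω
  · calc cs.length w = cs.length (normalForm w).toGroup := by rw [toGroup_normalForm]
      _ ≤ (normalForm w).weight := (normalForm w).length_toGroup_le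

noncomputable def normalFormEquiv : cox13.Group ≃ NormalForm where
  toFun := normalForm
  invFun := NormalForm.toGroup
  left_inv := toGroup_normalForm
  right_inv := normalForm_toGroup

theorem KleinWord.finite_weight_eq (k : ℕ) : Finite {w : KleinWord // w.weight = k} := by
  have := cs.finite_length_eq k
  have : Finite {v : NormalForm // v.weight = k} :=
    .of_equiv _ (normalFormEquiv.subtypeEquiv fun w => by
      rw [normalFormEquiv, Equiv.coe_fn_mk, weight_normalForm])
  exact .of_injective
    (fun w => (⟨(false, w.1), by simp [NormalForm.weight, w.2]⟩ : {v : NormalForm // v.weight = k}))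
    fun w w' h => by simpa [Subtype.ext_iff] using h

theorem KleinWord.fiberCardSeries_weight :
    fiberCardSeries weight = 1 + (2 * X + X ^ 2) * (1 + X * fiberCardSeries weight) := by
  have hT := finite_fiber_sumElim (v := fun _ : Unit => 0) (fun _ => Subtype.finite)
    (finite_fiber_add_const finite_weight_eq 1)
  calc fiberCardSeries weight
      = fiberCardSeries (Sum.elim (fun _ : Unit => 0)
          fun p : Syllable × (Unit ⊕ KleinWord) =>
            p.1.weight + Sum.elim (fun _ => 0) (fun w => w.weight + 1) p.2) :=
        fiberCardSeries_congr equivSum (by rintro (_ | x | ⟨x, w⟩) <;> rfl)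
    _ = 1 + (2 * X + X ^ 2) * (1 + X * fiberCardSeries weight) := by
      rw [fiberCardSeries_sumElim (fun _ => Subtype.finite)
          (finite_fiber_prod (fun _ => Subtype.finite) hT),
        fiberCardSeries_prod (fun _ => Subtype.finite) hT,
        fiberCardSeries_sumElim (fun _ => Subtype.finite)
          (finite_fiber_add_const finite_weight_eq 1),
        fiberCardSeries_add_const, Syllable.fiberCardSeries_weight,
        fiberCardSeries_eq_sum (fun _ : Unit => 0)]
      simp

theorem poincare13_eq : poincare13 = (1 + X) * fiberCardSeries KleinWord.weight :=
  calc poincare13 = fiberCardSeries NormalForm.weight :=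
        fiberCardSeries_congr normalFormEquiv weight_normalForm
    _ = fiberCardSeries Bool.toNat * fiberCardSeries KleinWord.weight :=
        fiberCardSeries_prod (v := Bool.toNat) (fun _ => Subtype.finite)
          KleinWord.finite_weight_eq
    _ = (1 + X) * fiberCardSeries KleinWord.weight := by
        rw [fiberCardSeries_eq_sum, Fintype.sum_bool]
        simp [add_comm]

end Cox13

theorem stmt_13 :
    (1 - X - X ^ 2) * poincare13 =
      (1 + X) ^ 2 := by
  rw [Cox13.poincare13_eq]
  linear_combination Cox13.KleinWord.fiberCardSeries_weight
end

section
/- Let M be the Coxeter matrix on the set {1, 2, 3, 4} with M(1,2) = M(2,3) = M(3,4) = ∞ (encoded as 0) and M(1,3) = M(1,4) = M(2,4) = 2. Then the Poincaré series W(t) = ∑_{k≥0} c_k t^k of the Coxeter group W(M) satisfies (1 − 2t) · W(t) = (1+t)² in ℤ⟦t⟧. -/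
open PowerSeries

/-- The Coxeter matrix on {1, …, 4} with M(1,2) = M(2,3) = M(3,4) = ∞ (encoded as 0) and M(1,3) = M(1,4) = M(2,4) = 2. -/
def cox16 : CoxeterMatrix (Fin 4) where
  M := !![1,0,2,2; 0,1,0,2; 2,0,1,0; 2,2,0,1]
  off_diagonal := by
    intro i i' h
    fin_cases i <;> fin_cases i' <;> simp_all

/-- The Poincaré series `W(t) = ∑ₖ cₖ tᵏ` of the Coxeter group of `cox16`, where `cₖ` is the
number of elements of length `k`. -/
noncomputable def poincare16 : PowerSeries ℤ :=
  PowerSeries.mk fun k =>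
    (Nat.card {w : cox16.Group // cox16.toCoxeterSystem.length w = k} : ℤ)

/-!
The group is right-angled: `s₀ s₂`, `s₀ s₃`, `s₁ s₃` commute and the other pairs generate free
products. Call a word normal if no two adjacent letters are equal and no adjacent commuting pair
is in decreasing order. `W` acts on normal words, `s i` inserting `i` in front and moving it to
the right past smaller letters commuting with it, cancelling it against a copy of `i` if it meets
one. This preserves normality because whatever may follow a letter `i` may also follow any
smaller `x` commuting with `i`, and the braid relations hold because a letter commuting with a
larger one has no smaller commuting partner. Then `w ↦ w • []` inverts `ξ ↦ π ξ` on normal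
words, and since `s i` lengthens a word by at most one, normal words are reduced: they form a
length-preserving transversal of `W`.

Normal words are the walks in a digraph on four vertices whose adjacency matrix `A` satisfies
`A 𝟙 = v := (3, 3, 2, 1)` and `A v = 2 v`, so there are `1`, `4` and `9 · 2ᵏ` of them of lengths
`0`, `1` and `k + 2`: these are the coefficients of `(1 + X)² / (1 - 2X)`.
-/

namespace CoxeterSystem

variable {B W : Type*} [Group W] {M : CoxeterMatrix B} (cs : CoxeterSystem M W)
  {L : List B → Prop} (φ : W →* Equiv.Perm {ξ : List B // L ξ})

lemma commute_simple_of_eq_two {i j : B} (h : M i j = 2) :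
    Commute (cs.simple i) (cs.simple j) := by
  have hsq := cs.simple_mul_simple_pow i j
  rw [h, pow_two, mul_eq_one_iff_eq_inv, mul_inv_rev, cs.inv_simple, cs.inv_simple] at hsq
  exact hsq

lemma wordProd_apply_wordProd
    (hprod : ∀ i (ξ : {ξ // L ξ}),
      cs.wordProd (φ (cs.simple i) ξ).1 = cs.simple i * cs.wordProd ξ.1)
    (ω : List B) (ξ : {ξ // L ξ}) :
    cs.wordProd (φ (cs.wordProd ω) ξ).1 = cs.wordProd ω * cs.wordProd ξ.1 := by
  induction ω with
  | nil => simp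
  | cons i ω ih => rw [cs.wordProd_cons, map_mul, Equiv.Perm.mul_apply, hprod, ih, mul_assoc]

lemma length_apply_wordProd_le
    (hlen : ∀ i (ξ : {ξ // L ξ}), (φ (cs.simple i) ξ).1.length ≤ ξ.1.length + 1)
    (ω : List B) (ξ : {ξ // L ξ}) :
    (φ (cs.wordProd ω) ξ).1.length ≤ ω.length + ξ.1.length := by
  induction ω with
  | nil => simp
  | cons i ω ih =>
    rw [cs.wordProd_cons, map_mul, Equiv.Perm.mul_apply, List.length_cons]
    linarith [hlen i (φ (cs.wordProd ω) ξ)]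

lemma apply_wordProd_nil (hnil : L []) (htail : ∀ i ξ, L (i :: ξ) → L ξ)
    (hcons : ∀ i (ξ : {ξ // L ξ}), L (i :: ξ.1) → (φ (cs.simple i) ξ).1 = i :: ξ.1)
    {ω : List B} (hω : L ω) : (φ (cs.wordProd ω) ⟨[], hnil⟩).1 = ω := by
  induction ω with
  | nil => simp
  | cons i ω ih =>
    have hω' := htail i ω hω
    rw [cs.wordProd_cons, map_mul, Equiv.Perm.mul_apply,
      show φ (cs.wordProd ω) ⟨[], hnil⟩ = ⟨ω, hω'⟩ from Subtype.ext (ih hω'), hcons i _ hω]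

lemma wordProd_apply_nil
    (hprod : ∀ i (ξ : {ξ // L ξ}),
      cs.wordProd (φ (cs.simple i) ξ).1 = cs.simple i * cs.wordProd ξ.1)
    (hnil : L []) (w : W) : cs.wordProd (φ w ⟨[], hnil⟩).1 = w := by
  obtain ⟨ω, rfl⟩ := cs.wordProd_surjective w
  simpa using cs.wordProd_apply_wordProd φ hprod ω ⟨[], hnil⟩

lemma isReduced_of_action
    (hlen : ∀ i (ξ : {ξ // L ξ}), (φ (cs.simple i) ξ).1.length ≤ ξ.1.length + 1)
    (hnil : L []) (htail : ∀ i ξ, L (i :: ξ) → L ξ)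
    (hcons : ∀ i (ξ : {ξ // L ξ}), L (i :: ξ.1) → (φ (cs.simple i) ξ).1 = i :: ξ.1)
    {ω : List B} (hω : L ω) : cs.IsReduced ω := by
  refine (cs.length_wordProd_le ω).antisymm ?_
  obtain ⟨ω', hred, heq⟩ := cs.exists_isReduced (cs.wordProd ω)
  calc ω.length = (φ (cs.wordProd ω) ⟨[], hnil⟩).1.length := by
        rw [cs.apply_wordProd_nil φ hnil htail hcons hω]
    _ ≤ ω'.length := by simpa [heq] using cs.length_apply_wordProd_le φ hlen ω' ⟨[], hnil⟩
    _ = cs.length (cs.wordProd ω) := by rw [heq, hred.eq]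

def lengthEquivOfAction
    (hprod : ∀ i (ξ : {ξ // L ξ}),
      cs.wordProd (φ (cs.simple i) ξ).1 = cs.simple i * cs.wordProd ξ.1)
    (hlen : ∀ i (ξ : {ξ // L ξ}), (φ (cs.simple i) ξ).1.length ≤ ξ.1.length + 1)
    (hnil : L []) (htail : ∀ i ξ, L (i :: ξ) → L ξ)
    (hcons : ∀ i (ξ : {ξ // L ξ}), L (i :: ξ.1) → (φ (cs.simple i) ξ).1 = i :: ξ.1) (k : ℕ) :
    {w : W // cs.length w = k} ≃ {ξ : List B // L ξ ∧ ξ.length = k} where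
  toFun w := ⟨(φ w ⟨[], hnil⟩).1, (φ w ⟨[], hnil⟩).2, by
    rw [← (cs.isReduced_of_action φ hlen hnil htail hcons (φ w ⟨[], hnil⟩).2).eq,
      cs.wordProd_apply_nil φ hprod hnil, w.2]⟩
  invFun ξ := ⟨cs.wordProd ξ.1, by
    rw [(cs.isReduced_of_action φ hlen hnil htail hcons ξ.2.1).eq, ξ.2.2]⟩
  left_inv w := Subtype.ext (cs.wordProd_apply_nil φ hprod hnil w)
  right_inv ξ := Subtype.ext (cs.apply_wordProd_nil φ hnil htail hcons ξ.2.1)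

end CoxeterSystem

namespace CoxeterMatrix

variable {B : Type*} [LinearOrder B] (M : CoxeterMatrix B)

def LexAdj (x y : B) : Prop := x ≠ y ∧ (M x y = 2 → x < y)

instance : DecidableRel M.LexAdj := fun _ _ => inferInstanceAs (Decidable (_ ∧ _))

def lexCons (i : B) : List B → List B
  | [] => [i]
  | x :: t => if x = i then t else if M i x = 2 ∧ x < i then x :: lexCons i t else i :: x :: t

lemma eq_or_commute_lt_or_lexAdj (i x : B) : x = i ∨ (M i x = 2 ∧ x < i) ∨ M.LexAdj i x := by
  rcases lt_trichotomy x i with h | rfl | h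
  · by_cases hc : M i x = 2
    · exact Or.inr (Or.inl ⟨hc, h⟩)
    · exact Or.inr (Or.inr ⟨h.ne', fun hc' => absurd hc' hc⟩)
  · exact Or.inl rfl
  · exact Or.inr (Or.inr ⟨h.ne, fun _ => h⟩)

variable {M}

lemma not_lexAdj_of_lt {i x : B} (hc : M i x = 2) (hlt : x < i) : ¬M.LexAdj i x :=
  fun h => hlt.not_gt (h.2 hc)

@[simp] lemma lexCons_nil (i : B) : M.lexCons i [] = [i] := rfl

@[simp] lemma lexCons_cons_self (i : B) (t : List B) : M.lexCons i (i :: t) = t := by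
  simp [lexCons]

lemma lexCons_cons_of_lt {i x : B} (hc : M i x = 2) (hlt : x < i) (t : List B) :
    M.lexCons i (x :: t) = x :: M.lexCons i t := by
  simp [lexCons, hlt.ne, hc, hlt]

lemma lexCons_cons_of_lexAdj {i x : B} (h : M.LexAdj i x) (t : List B) :
    M.lexCons i (x :: t) = i :: x :: t := by
  have : ¬(M i x = 2 ∧ x < i) := fun hc => (h.2 hc.1).not_gt hc.2
  simp [lexCons, h.1.symm, this]

lemma lexCons_of_isChain_cons {i : B} {t : List B} (h : (i :: t).IsChain M.LexAdj) :
    M.lexCons i t = i :: t := by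
  cases t with
  | nil => rfl
  | cons x t => exact lexCons_cons_of_lexAdj (List.isChain_cons_cons.mp h).1 t

lemma lexCons_lexCons (i : B) {ξ : List B} (hξ : ξ.IsChain M.LexAdj) :
    M.lexCons i (M.lexCons i ξ) = ξ := by
  induction ξ with
  | nil => simp
  | cons x t ih =>
    rcases M.eq_or_commute_lt_or_lexAdj i x with rfl | ⟨hc, hlt⟩ | h
    · rw [lexCons_cons_self, lexCons_of_isChain_cons hξ]
    · rw [lexCons_cons_of_lt hc hlt, lexCons_cons_of_lt hc hlt, ih hξ.tail]
    · rw [lexCons_cons_of_lexAdj h, lexCons_cons_self]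

lemma length_lexCons_le (i : B) (ξ : List B) : (M.lexCons i ξ).length ≤ ξ.length + 1 := by
  induction ξ with
  | nil => simp
  | cons x t ih =>
    rcases M.eq_or_commute_lt_or_lexAdj i x with rfl | ⟨hc, hlt⟩ | h
    · simp only [lexCons_cons_self, List.length_cons]; omega
    · simpa [lexCons_cons_of_lt hc hlt] using ih
    · simp [lexCons_cons_of_lexAdj h]

lemma mem_head?_lexCons {i y : B} {ξ : List B} (hξ : ξ.IsChain M.LexAdj)
    (hy : y ∈ (M.lexCons i ξ).head?) : y = i ∨ y ∈ ξ.head? ∨ M.LexAdj i y := by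
  cases ξ with
  | nil => simp_all
  | cons x t =>
    rcases M.eq_or_commute_lt_or_lexAdj i x with rfl | ⟨hc, hlt⟩ | h
    · rw [lexCons_cons_self] at hy
      exact Or.inr (Or.inr ((List.isChain_cons.mp hξ).1 y hy))
    · simp_all [lexCons_cons_of_lt hc hlt]
    · simp_all [lexCons_cons_of_lexAdj h]

lemma isChain_lexCons
    (hfollow : ∀ i x z, M i x = 2 → x < i → M.LexAdj i z → M.LexAdj x z)
    (i : B) {ξ : List B} (hξ : ξ.IsChain M.LexAdj) : (M.lexCons i ξ).IsChain M.LexAdj := by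
  induction ξ with
  | nil => exact List.isChain_singleton i
  | cons x t ih =>
    rcases M.eq_or_commute_lt_or_lexAdj i x with rfl | ⟨hc, hlt⟩ | h
    · simpa using hξ.tail
    · rw [lexCons_cons_of_lt hc hlt, List.isChain_cons]
      refine ⟨fun y hy => ?_, ih hξ.tail⟩
      rcases mem_head?_lexCons hξ.tail hy with rfl | hy | hy
      · exact ⟨hlt.ne, fun _ => hlt⟩
      · exact (List.isChain_cons.mp hξ).1 y hy
      · exact hfollow i x y hc hlt hy
    · rw [lexCons_cons_of_lexAdj h]
      exact List.isChain_cons_cons.mpr ⟨h, hξ⟩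

lemma lexCons_of_forall_head?_ne {i : B} (hmin : ∀ x, M i x = 2 → i ≤ x) {η : List B}
    (hη : ∀ x ∈ η.head?, x ≠ i) : M.lexCons i η = i :: η := by
  cases η with
  | nil => rfl
  | cons x t =>
    have hx : x ≠ i := hη x rfl
    exact lexCons_cons_of_lexAdj ⟨hx.symm, fun hc => (hmin x hc).lt_of_ne hx.symm⟩ t

lemma lexCons_comm {i j : B} (hc : M i j = 2) (hlt : i < j) (hmin : ∀ x, M i x = 2 → i ≤ x)
    {ξ : List B} (hξ : ξ.IsChain M.LexAdj) :
    M.lexCons i (M.lexCons j ξ) = M.lexCons j (M.lexCons i ξ) := by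
  have hji : M j i = 2 := M.symmetric i j ▸ hc
  cases ξ with
  | nil =>
    rw [lexCons_nil, lexCons_nil, lexCons_cons_of_lt hji hlt, lexCons_nil,
      lexCons_of_forall_head?_ne hmin (by simpa using hlt.ne')]
  | cons x t =>
    rcases eq_or_ne x i with rfl | hx
    · rw [lexCons_cons_of_lt hji hlt, lexCons_cons_self, lexCons_cons_self]
    · have hhead : ∀ y ∈ (M.lexCons j (x :: t)).head?, y ≠ i := by
        rintro y hy rfl
        rcases mem_head?_lexCons hξ hy with h | h | h
        · exact hlt.ne h
        · exact hx (Option.some_injective _ h)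
        · exact not_lexAdj_of_lt hji hlt h
      rw [lexCons_of_forall_head?_ne hmin hhead,
        lexCons_of_forall_head?_ne hmin (by simpa using hx), lexCons_cons_of_lt hji hlt]

lemma wordProd_lexCons {W : Type*} [Group W] (cs : CoxeterSystem M W) (i : B) (ξ : List B) :
    cs.wordProd (M.lexCons i ξ) = cs.simple i * cs.wordProd ξ := by
  induction ξ with
  | nil => simp
  | cons x t ih =>
    rcases M.eq_or_commute_lt_or_lexAdj i x with rfl | ⟨hc, hlt⟩ | h
    · rw [lexCons_cons_self, cs.wordProd_cons, cs.simple_mul_simple_cancel_left]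
    · rw [lexCons_cons_of_lt hc hlt, cs.wordProd_cons, ih, cs.wordProd_cons, ← mul_assoc,
        ← mul_assoc, (cs.commute_simple_of_eq_two hc).eq]
    · rw [lexCons_cons_of_lexAdj h, cs.wordProd_cons]

variable (hfollow : ∀ i x z, M i x = 2 → x < i → M.LexAdj i z → M.LexAdj x z)

def lexPerm (i : B) : Equiv.Perm {ξ : List B // ξ.IsChain M.LexAdj} :=
  Function.Involutive.toPerm (fun ξ => ⟨M.lexCons i ξ, M.isChain_lexCons hfollow i ξ.2⟩)
    fun ξ => Subtype.ext (M.lexCons_lexCons i ξ.2)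

lemma isLiftable_lexPerm (hRA : ∀ i j, i ≠ j → M i j = 0 ∨ M i j = 2)
    (hmin : ∀ i j x, M i j = 2 → i < j → M i x = 2 → i ≤ x) :
    M.IsLiftable (lexPerm hfollow) := by
  have mul_self (i : B) : lexPerm hfollow i * lexPerm hfollow i = 1 :=
    Equiv.ext fun ξ => Subtype.ext (M.lexCons_lexCons i ξ.2)
  intro i j
  rcases eq_or_ne i j with rfl | hne
  · rw [M.diagonal, pow_one, mul_self]
  rcases hRA i j hne with h | h
  · rw [h, pow_zero]
  have hcomm : Commute (lexPerm hfollow i) (lexPerm hfollow j) := by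
    refine Equiv.ext fun ξ => Subtype.ext ?_
    rcases hne.lt_or_gt with hlt | hlt
    · exact M.lexCons_comm h hlt (hmin i j · h hlt) ξ.2
    · have h' : M j i = 2 := M.symmetric i j ▸ h
      exact (M.lexCons_comm h' hlt (hmin j i · h' hlt) ξ.2).symm
  rw [h, hcomm.mul_pow, pow_two, pow_two, mul_self, mul_self, one_mul]

end CoxeterMatrix

def CoxeterSystem.lexNormalEquiv {B W : Type*} [LinearOrder B] [Group W] {M : CoxeterMatrix B}
    (cs : CoxeterSystem M W)
    (hfollow : ∀ i x z, M i x = 2 → x < i → M.LexAdj i z → M.LexAdj x z)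
    (hRA : ∀ i j, i ≠ j → M i j = 0 ∨ M i j = 2)
    (hmin : ∀ i j x, M i j = 2 → i < j → M i x = 2 → i ≤ x) (k : ℕ) :
    {w : W // cs.length w = k} ≃ {ξ : List B // ξ.IsChain M.LexAdj ∧ ξ.length = k} :=
  cs.lengthEquivOfAction (cs.lift ⟨_, M.isLiftable_lexPerm hfollow hRA hmin⟩)
    (fun i ξ => by
      rw [cs.lift_apply_simple]
      exact M.wordProd_lexCons cs i ξ.1)
    (fun i ξ => by
      rw [cs.lift_apply_simple]
      exact M.length_lexCons_le i ξ.1)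
    List.isChain_nil (fun _ _ h => h.tail)
    (fun i ξ h => by
      rw [cs.lift_apply_simple]
      exact M.lexCons_of_isChain_cons h) k

open Matrix

def Matrix.ofRel {B : Type*} (R : B → B → Prop) [DecidableRel R] : Matrix B B ℕ :=
  Matrix.of fun x y => if R x y then 1 else 0

namespace List

variable {B : Type*}

def consSigmaEquiv (P : List B → Prop) (k : ℕ) :
    {ξ : List B // P ξ ∧ ξ.length = k + 1} ≃
      Σ x : B, {ξ : List B // P (x :: ξ) ∧ ξ.length = k} where
  toFun ξ :=
    have hne : ξ.1 ≠ [] := ne_nil_of_length_eq_add_one ξ.2.2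
    ⟨ξ.1.head hne, ξ.1.tail, by rw [cons_head_tail hne]; exact ξ.2.1, by simp [ξ.2.2]⟩
  invFun p := ⟨p.1 :: p.2.1, p.2.2.1, by simp [p.2.2.2]⟩
  left_inv ξ := Subtype.ext (cons_head_tail _)
  right_inv _ := rfl

instance finite_subtype_length_eq [Finite B] (P : List B → Prop) (k : ℕ) :
    Finite {ξ : List B // P ξ ∧ ξ.length = k} :=
  ((finite_length_eq B k).subset fun _ h => h.2).to_subtype

variable (R : B → B → Prop)

noncomputable def chainCount (k : ℕ) (x : B) : ℕ :=
  Nat.card {ξ : List B // (x :: ξ).IsChain R ∧ ξ.length = k}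

lemma chainCount_zero : chainCount R 0 = 1 := by
  ext x
  rw [chainCount, Pi.one_apply, Nat.card_eq_one_iff_exists]
  exact ⟨⟨[], isChain_singleton x, rfl⟩, fun ξ => Subtype.ext (eq_nil_of_length_eq_zero ξ.2.2)⟩

variable [Fintype B] [DecidableRel R]

lemma chainCount_succ (k : ℕ) : chainCount R (k + 1) = ofRel R *ᵥ chainCount R k := by
  ext x
  rw [chainCount, Nat.card_congr (consSigmaEquiv _ k), Nat.card_sigma]
  simp only [Matrix.mulVec, dotProduct, ofRel, Matrix.of_apply, ite_mul, one_mul, zero_mul]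
  refine Finset.sum_congr rfl fun y _ => ?_
  simp only [isChain_cons_cons]
  split_ifs with h
  · simp [h, chainCount]
  · simp [h]

lemma chainCount_eq [DecidableEq B] (k : ℕ) : chainCount R k = ofRel R ^ k *ᵥ 1 := by
  induction k with
  | zero => simp [chainCount_zero]
  | succ k ih => rw [chainCount_succ, ih, Matrix.mulVec_mulVec, pow_succ']

lemma card_isChain_length_succ [DecidableEq B] (k : ℕ) :
    Nat.card {ξ : List B // ξ.IsChain R ∧ ξ.length = k + 1} = ∑ x, (ofRel R ^ k *ᵥ 1) x := by
  rw [Nat.card_congr (consSigmaEquiv _ k), Nat.card_sigma, ← chainCount_eq]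
  rfl

end List

lemma cox16_eq_zero_or_eq_two : ∀ i j : Fin 4, i ≠ j → cox16 i j = 0 ∨ cox16 i j = 2 := by
  intro i j; fin_cases i <;> fin_cases j <;> decide

lemma cox16_lexAdj_of_lexAdj :
    ∀ i x z : Fin 4, cox16 i x = 2 → x < i → cox16.LexAdj i z → cox16.LexAdj x z := by
  intro i x z; fin_cases i <;> fin_cases x <;> fin_cases z <;> decide

lemma cox16_le_of_eq_two :
    ∀ i j x : Fin 4, cox16 i j = 2 → i < j → cox16 i x = 2 → i ≤ x := by
  intro i j x; fin_cases i <;> fin_cases j <;> fin_cases x <;> decide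

lemma cox16_ofRel_mulVec_one : Matrix.ofRel cox16.LexAdj *ᵥ 1 = ![3, 3, 2, 1] := by
  decide

lemma cox16_ofRel_mulVec_eigen :
    Matrix.ofRel cox16.LexAdj *ᵥ ![3, 3, 2, 1] = 2 • ![3, 3, 2, 1] := by
  decide

lemma cox16_ofRel_pow_succ_mulVec_one (k : ℕ) :
    Matrix.ofRel cox16.LexAdj ^ (k + 1) *ᵥ 1 = 2 ^ k • ![3, 3, 2, 1] := by
  induction k with
  | zero => rw [pow_one, cox16_ofRel_mulVec_one, pow_zero, one_smul]
  | succ k ih =>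
    rw [pow_succ', ← mulVec_mulVec, ih, mulVec_smul, cox16_ofRel_mulVec_eigen, smul_smul,
      pow_succ]

lemma cox16_card_length_eq_zero :
    Nat.card {w : cox16.Group // cox16.toCoxeterSystem.length w = 0} = 1 :=
  Nat.card_eq_one_iff_exists.mpr ⟨⟨1, cox16.toCoxeterSystem.length_one⟩,
    fun w => Subtype.ext (cox16.toCoxeterSystem.length_eq_zero_iff.mp w.2)⟩

lemma cox16_card_length_eq_succ (k : ℕ) :
    Nat.card {w : cox16.Group // cox16.toCoxeterSystem.length w = k + 1} =
      ∑ x, (Matrix.ofRel cox16.LexAdj ^ k *ᵥ 1) x := by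
  rw [Nat.card_congr (cox16.toCoxeterSystem.lexNormalEquiv cox16_lexAdj_of_lexAdj
    cox16_eq_zero_or_eq_two cox16_le_of_eq_two _), List.card_isChain_length_succ]

lemma cox16_card_length_eq_one :
    Nat.card {w : cox16.Group // cox16.toCoxeterSystem.length w = 1} = 4 := by
  simp [cox16_card_length_eq_succ 0]

lemma cox16_card_length_eq_add_two (k : ℕ) :
    Nat.card {w : cox16.Group // cox16.toCoxeterSystem.length w = k + 2} = 9 * 2 ^ k := by
  rw [cox16_card_length_eq_succ, cox16_ofRel_pow_succ_mulVec_one]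
  simp only [Pi.smul_apply, smul_eq_mul, Fin.sum_univ_four, cons_val_zero, cons_val_one, cons_val]
  ring

namespace PowerSeries

variable {R : Type*} [Ring R]

lemma coeff_zero_one_sub_C_mul_X_mul (a : R) (f : PowerSeries R) :
    coeff 0 ((1 - C a * X) * f) = coeff 0 f := by
  simp [sub_mul, mul_assoc]

lemma coeff_succ_one_sub_C_mul_X_mul (a : R) (f : PowerSeries R) (n : ℕ) :
    coeff (n + 1) ((1 - C a * X) * f) = coeff (n + 1) f - a * coeff n f := by
  rw [sub_mul, one_mul, mul_assoc, map_sub, coeff_C_mul, coeff_succ_X_mul]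

end PowerSeries

theorem stmt_16 :
    (1 - 2 * X) * poincare16 =
      (1 + X) ^ 2 := by
  have hcoeff (k : ℕ) :
      coeff k poincare16 = Nat.card {w : cox16.Group // cox16.toCoxeterSystem.length w = k} :=
    coeff_mk _ _
  rw [← map_ofNat C 2,
    show ((1 : PowerSeries ℤ) + X) ^ 2 = 1 + C 2 * X + X ^ 2 by rw [map_ofNat]; ring]
  ext (_ | _ | _ | n) <;>
    simp only [coeff_zero_one_sub_C_mul_X_mul, coeff_succ_one_sub_C_mul_X_mul, map_add, coeff_one,
      coeff_C_mul, coeff_X, coeff_X_pow, hcoeff, cox16_card_length_eq_zero,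
      cox16_card_length_eq_one, cox16_card_length_eq_add_two]
  · norm_num
  · norm_num
  · norm_num
  · rw [if_neg (by omega), if_neg (by omega)]
    push_cast
    ring
end

section
/- Let M be the Coxeter matrix on the set {1, 2, 3, 4} with M(i,j) = 3 for all i ≠ j. Then the Poincaré series W(t) = ∑_{k≥0} c_k t^k of the Coxeter group W(M) satisfies (1 − 2t − 2t² + 3t³) · W(t) = (1+t)(1+t+t²) in ℤ⟦t⟧. -/
open PowerSeries

/-- The Coxeter matrix on {1, …, 4} with all off-diagonal entries 3. -/
def cox18 : CoxeterMatrix (Fin 4) where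
  M := !![1,3,3,3; 3,1,3,3; 3,3,1,3; 3,3,3,1]
  off_diagonal := by
    intro i i' h
    fin_cases i <;> fin_cases i' <;> simp_all

/-- The Poincaré series `W(t) = ∑ₖ cₖ tᵏ` of the Coxeter group of `cox18`, where `cₖ` is the
number of elements of length `k`. -/
noncomputable def poincare18 : PowerSeries ℤ :=
  PowerSeries.mk fun k =>
    (Nat.card {w : cox18.Group // cox18.toCoxeterSystem.length w = k} : ℤ)

/-!
Inclusion–exclusion over right descent sets: `∑_{J ⊆ D(w)} (-1)^{|J|}` vanishes unless `w = 1`,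
so `∑_J (-1)^{|J|} D_J(t) = 1`, where `D_J(t)` counts the elements having every `j ∈ J` as a right
descent. Such an element is `v w_J` with `v` free of descents in `J` and `w_J` the longest element
of the parabolic subgroup `W_J`, so `D_J = t^{ℓ(w_J)} W(t) / W_J(t)`, with `W_J` of type `A₁` when
`|J| = 1` and `A₂` when `|J| = 2`. Three generators generate an infinite group (of type `Ã₂`), so
no element has three descents and larger `J` contribute nothing. All facts about descents are read
off from the geometric representation, in which `i` is a right descent of `w` iff `w(eᵢ) ≤ 0`.
-/

open Finset Matrix

namespace CoxeterSystem

variable {B W : Type*} [Group W] {M : CoxeterMatrix B} (cs : CoxeterSystem M W)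

local prefix:100 "s" => cs.simple
local prefix:100 "ℓ" => cs.length

theorem simple_mul_simple_mul_simple_of_M_eq_three {i j : B} (h : M i j = 3) :
    s i * s j * s i = s j * s i * s j := by
  have := cs.wordProd_braidWord_eq j i
  simpa [braidWord, M.symmetric j i, h, alternatingWord, wordProd, mul_assoc] using this

open scoped Classical in
theorem sum_powerset_neg_one_pow_of_forall_isRightDescent [Fintype B] (w : W) :
    ∑ J ∈ univ.powerset, (if ∀ i ∈ J, cs.IsRightDescent w i then (-1 : ℤ) ^ #J else 0) =
      if w = 1 then 1 else 0 := by
  have hJ : {J ∈ (univ : Finset B).powerset | ∀ i ∈ J, cs.IsRightDescent w i} =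
      ({i | cs.IsRightDescent w i} : Finset B).powerset := by
    ext J
    simp [subset_iff]
  have hD : ({i | cs.IsRightDescent w i} : Finset B) = ∅ ↔ w = 1 := by
    refine ⟨fun h => ?_, fun h => by simp [h, cs.not_isRightDescent_one]⟩
    by_contra hw
    obtain ⟨i, hi⟩ := cs.exists_rightDescent_of_ne_one hw
    simpa [hi] using filter_eq_empty_iff.mp h (mem_univ i)
  rw [← sum_filter, hJ, sum_powerset_neg_one_pow_card]
  exact if_congr hD rfl rfl

section Counting

variable [Finite B]

theorem finite_setOf_length_eq (k : ℕ) : {w : W | ℓ w = k}.Finite := by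
  refine ((List.finite_length_eq B k).image cs.wordProd).subset fun w hw => ?_
  obtain ⟨ω, hω, rfl⟩ := cs.exists_isReduced w
  exact ⟨ω, hω.symm.trans hw, rfl⟩

open scoped Classical in
noncomputable def lengthSeries (P : W → Prop) : ℤ⟦X⟧ :=
  PowerSeries.mk fun k => #{w ∈ (cs.finite_setOf_length_eq k).toFinset | P w}

theorem coeff_lengthSeries (P : W → Prop) [DecidablePred P] (k : ℕ) :
    coeff k (cs.lengthSeries P) = #{w ∈ (cs.finite_setOf_length_eq k).toFinset | P w} := by
  rw [lengthSeries, coeff_mk]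
  congr

theorem lengthSeries_eq_zero {P : W → Prop} (h : ∀ w, ¬P w) : cs.lengthSeries P = 0 := by
  classical
  ext k
  simp [coeff_lengthSeries, h]

theorem lengthSeries_and_add_and_not (P Q : W → Prop) :
    cs.lengthSeries (fun w => P w ∧ Q w) + cs.lengthSeries (fun w => P w ∧ ¬Q w) =
      cs.lengthSeries P := by
  classical
  ext k
  simp only [map_add, coeff_lengthSeries, ← filter_filter]
  exact_mod_cast card_filter_add_card_filter_not _

theorem lengthSeries_eq_X_pow_mul {P Q : W → Prop} {u : W} (hu : u * u = 1) (n : ℕ)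
    (hPQ : ∀ v, P v → Q (v * u) ∧ ℓ (v * u) = ℓ v + n) (hQP : ∀ w, Q w → P (w * u)) :
    cs.lengthSeries Q = X ^ n * cs.lengthSeries P := by
  classical
  have hu' : ∀ w, w * u * u = w := by simp [mul_assoc, hu]
  have hlen : ∀ w, Q w → ℓ w = ℓ (w * u) + n := fun w hw => by
    simpa [hu'] using (hPQ _ (hQP w hw)).2
  ext k
  rw [coeff_X_pow_mul', coeff_lengthSeries, coeff_lengthSeries]
  split_ifs with hk
  · refine congrArg _ (card_nbij' (· * u) (· * u) ?_ ?_ (fun w _ => hu' w) (fun v _ => hu' v))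
    · intro w hw
      simp only [coe_filter, Set.Finite.mem_toFinset, Set.mem_ofPred_eq] at hw ⊢
      exact ⟨by have := hlen w hw.2; omega, hQP w hw.2⟩
    · intro v hv
      simp only [coe_filter, Set.Finite.mem_toFinset, Set.mem_ofPred_eq] at hv ⊢
      exact ⟨by have := (hPQ v hv.2).2; omega, (hPQ v hv.2).1⟩
  · simp only [Nat.cast_eq_zero, card_eq_zero, filter_eq_empty_iff, Set.Finite.mem_toFinset,
      Set.mem_ofPred_eq]
    intro w hw hQ
    have := hlen w hQ
    omega

theorem lengthSeries_isRightDescent (i : B) :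
    cs.lengthSeries (cs.IsRightDescent · i) = X * cs.lengthSeries (¬cs.IsRightDescent · i) := by
  rw [← pow_one (X : ℤ⟦X⟧)]
  refine cs.lengthSeries_eq_X_pow_mul (cs.simple_mul_simple_self i) 1
    (fun v hv => ⟨?_, cs.not_isRightDescent_iff.mp hv⟩)
    (fun w hw => cs.isRightDescent_iff_not_isRightDescent_mul.mp hw)
  rwa [cs.isRightDescent_iff_not_isRightDescent_mul, cs.simple_mul_simple_cancel_right]

theorem one_add_X_mul_lengthSeries_not_isRightDescent (i : B) :
    (1 + X) * cs.lengthSeries (¬cs.IsRightDescent · i) = cs.lengthSeries fun _ => True := by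
  have h := cs.lengthSeries_and_add_and_not (fun _ => True) (cs.IsRightDescent · i)
  simp only [true_and] at h
  rw [← h, lengthSeries_isRightDescent]
  ring

end Counting

theorem sum_powerset_neg_one_pow_smul_lengthSeries [Fintype B] :
    ∑ J ∈ univ.powerset,
      (-1 : ℤ) ^ #J • cs.lengthSeries (fun w => ∀ i ∈ J, cs.IsRightDescent w i) = 1 := by
  classical
  ext k
  simp only [map_sum, map_zsmul, smul_eq_mul, coeff_lengthSeries, card_filter, Nat.cast_sum,
    Nat.cast_ite, Nat.cast_one, Nat.cast_zero, mul_sum, mul_ite, mul_one, mul_zero]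
  rw [sum_comm]
  simp only [sum_powerset_neg_one_pow_of_forall_isRightDescent]
  rw [sum_ite_eq', coeff_one]
  simp [eq_comm]

variable [Fintype B] [DecidableEq B]

theorem mulVec_map_mul_simple (ρ : W →* Matrix B B ℤ) (w : W) (i : B) (v : B → ℤ) :
    ρ (w * s i) *ᵥ v = ρ w *ᵥ (ρ (s i) *ᵥ v) := by
  rw [map_mul, Matrix.mulVec_mulVec]

theorem mulVec_single_ne_zero (ρ : W →* Matrix B B ℤ) (w : W) (i : B) :
    ρ w *ᵥ Pi.single i 1 ≠ 0 := by
  intro h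
  have := congrArg (ρ w⁻¹ *ᵥ ·) h
  simp only [Matrix.mulVec_mulVec, ← map_mul, inv_mul_cancel, map_one, Matrix.one_mulVec,
    Matrix.mulVec_zero] at this
  simpa using congrFun this i

/-- The geometric representation, in the basis of simple roots, of a Coxeter group all of whose
off-diagonal Coxeter numbers are `3`. -/
structure IsGeometricRepresentation (ρ : W →* Matrix B B ℤ) : Prop where
  M_eq_three : ∀ ⦃i j : B⦄, i ≠ j → M i j = 3
  mulVec_single_self : ∀ i, ρ (s i) *ᵥ Pi.single i 1 = -Pi.single i 1
  mulVec_single_of_ne :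
    ∀ ⦃i j : B⦄, i ≠ j → ρ (s i) *ᵥ Pi.single j 1 = Pi.single j 1 + Pi.single i 1

namespace IsGeometricRepresentation

variable {cs} {ρ : W →* Matrix B B ℤ}

theorem nonneg_of_not_isRightDescent (hρ : cs.IsGeometricRepresentation ρ) {w : W} {i : B}
    (hwi : ¬cs.IsRightDescent w i) : 0 ≤ ρ w *ᵥ Pi.single i 1 := by
  induction hn : ℓ w using Nat.strong_induction_on generalizing w i with
  | _ n ih =>
  obtain rfl | hw := eq_or_ne w 1
  · rw [map_one, Matrix.one_mulVec]
    exact Pi.single_nonneg.2 zero_le_one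
  obtain ⟨j, hwj⟩ := cs.exists_rightDescent_of_ne_one hw
  have hij : i ≠ j := by rintro rfl; exact hwi hwj
  obtain ⟨w₁, rfl⟩ : ∃ w₁, w = w₁ * s j := ⟨w * s j, (cs.simple_mul_simple_cancel_right j).symm⟩
  have hℓ₁ : ℓ w₁ + 1 = ℓ (w₁ * s j) := by
    simpa using cs.isRightDescent_iff.mp hwj
  have hw₁j : ¬cs.IsRightDescent w₁ j := by
    simpa using cs.isRightDescent_iff_not_isRightDescent_mul.mp hwj
  rw [mulVec_map_mul_simple, hρ.mulVec_single_of_ne hij.symm, Matrix.mulVec_add]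
  by_cases hw₁i : cs.IsRightDescent w₁ i
  · obtain ⟨w₂, rfl⟩ : ∃ w₂, w₁ = w₂ * s i :=
      ⟨w₁ * s i, (cs.simple_mul_simple_cancel_right i).symm⟩
    have hℓ₂ : ℓ w₂ + 1 = ℓ (w₂ * s i) := by
      simpa using cs.isRightDescent_iff.mp hw₁i
    -- otherwise `w₂ sᵢ sⱼ sᵢ = w₂ sⱼ sᵢ sⱼ` would have length `ℓ w₂ + 3` and at most `ℓ w₂ + 1`
    have hw₂j : ¬cs.IsRightDescent w₂ j := by
      intro hw₂j
      have hbraid : w₂ * s i * s j * s i = w₂ * s j * s i * s j := by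
        rw [mul_assoc (w₂ * s i), mul_assoc w₂, ← mul_assoc (s i),
          cs.simple_mul_simple_mul_simple_of_M_eq_three (hρ.M_eq_three hij)]
        simp only [mul_assoc]
      have h := cs.not_isRightDescent_iff.mp hwi
      rw [hbraid] at h
      have := cs.isRightDescent_iff.mp hw₂j
      have := cs.length_mul_simple (w₂ * s j) i
      have := cs.length_mul_simple (w₂ * s j * s i) j
      omega
    rw [mulVec_map_mul_simple, mulVec_map_mul_simple, hρ.mulVec_single_self,
      hρ.mulVec_single_of_ne hij, ← Matrix.mulVec_add, ← add_assoc, neg_add_cancel_comm]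
    exact ih _ (by omega) hw₂j rfl
  · exact add_nonneg (ih _ (by omega) hw₁i rfl) (ih _ (by omega) hw₁j rfl)

theorem not_isRightDescent_iff (hρ : cs.IsGeometricRepresentation ρ) {w : W} {i : B} :
    ¬cs.IsRightDescent w i ↔ 0 ≤ ρ w *ᵥ Pi.single i 1 := by
  refine ⟨hρ.nonneg_of_not_isRightDescent, fun h hwi => mulVec_single_ne_zero ρ w i ?_⟩
  have h' := hρ.nonneg_of_not_isRightDescent (cs.isRightDescent_iff_not_isRightDescent_mul.mp hwi)
  rw [mulVec_map_mul_simple, hρ.mulVec_single_self, Matrix.mulVec_neg, neg_nonneg] at h'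
  exact le_antisymm h' h

theorem isRightDescent_iff (hρ : cs.IsGeometricRepresentation ρ) {w : W} {i : B} :
    cs.IsRightDescent w i ↔ ρ w *ᵥ Pi.single i 1 ≤ 0 := by
  refine ⟨fun hwi => ?_, fun h => by_contra fun hwi => mulVec_single_ne_zero ρ w i
    (le_antisymm h (hρ.nonneg_of_not_isRightDescent hwi))⟩
  have h' := hρ.nonneg_of_not_isRightDescent (cs.isRightDescent_iff_not_isRightDescent_mul.mp hwi)
  rwa [mulVec_map_mul_simple, hρ.mulVec_single_self, Matrix.mulVec_neg, neg_nonneg] at h'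

/-- The hypotheses are preserved when passing from `x` to `x sₐ` and from `(a, b, c)` to
`(b, c, a)`, while `a` is a descent of `x`, so `x` admits arbitrarily long descending chains. -/
theorem le_length_of_mulVec_nonpos (hρ : cs.IsGeometricRepresentation ρ) (n : ℕ) {x : W}
    {a b c : B} (hab : a ≠ b) (hbc : b ≠ c) (hca : c ≠ a) (ha : ρ x *ᵥ Pi.single a 1 ≤ 0)
    (hb : ρ x *ᵥ Pi.single b 1 ≤ 0) (hca' : ρ x *ᵥ (Pi.single c 1 + Pi.single a 1) ≤ 0) :
    n ≤ ℓ x := by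
  induction n generalizing x a b c with
  | zero => exact Nat.zero_le _
  | succ n ih =>
    have hx := cs.isRightDescent_iff.mp (hρ.isRightDescent_iff.mpr ha)
    have hn := ih (x := x * s a) hbc hca hab
      (by rw [mulVec_map_mul_simple, hρ.mulVec_single_of_ne hab, Matrix.mulVec_add]
          exact add_nonpos hb ha)
      (by rwa [mulVec_map_mul_simple, hρ.mulVec_single_of_ne hca.symm])
      (by rwa [mulVec_map_mul_simple, Matrix.mulVec_add, hρ.mulVec_single_self,
            hρ.mulVec_single_of_ne hab, ← add_assoc, neg_add_cancel_comm])
    omega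

theorem not_forall_isRightDescent (hρ : cs.IsGeometricRepresentation ρ) {J : Finset B}
    (hJ : 2 < #J) (w : W) : ¬∀ i ∈ J, cs.IsRightDescent w i := by
  intro h
  obtain ⟨a, ha, b, hb, c, hc, hab, hac, hbc⟩ := two_lt_card.mp hJ
  have hdesc := fun i hi => hρ.isRightDescent_iff.mp (h i hi)
  have := hρ.le_length_of_mulVec_nonpos (ℓ w + 1) hab hbc hac.symm (hdesc a ha) (hdesc b hb)
    (by rw [Matrix.mulVec_add]; exact add_nonpos (hdesc c hc) (hdesc a ha))
  omega

theorem mulVec_mul_longest_single_left (hρ : cs.IsGeometricRepresentation ρ) {i j : B}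
    (hij : i ≠ j) (w : W) :
    ρ (w * (s i * s j * s i)) *ᵥ Pi.single i 1 = -(ρ w *ᵥ Pi.single j 1) := by
  simp only [← mul_assoc, mulVec_map_mul_simple, hρ.mulVec_single_self, Matrix.mulVec_neg,
    hρ.mulVec_single_of_ne hij.symm, Matrix.mulVec_add, hρ.mulVec_single_of_ne hij]
  abel

theorem mulVec_mul_longest_single_right (hρ : cs.IsGeometricRepresentation ρ) {i j : B}
    (hij : i ≠ j) (w : W) :
    ρ (w * (s i * s j * s i)) *ᵥ Pi.single j 1 = -(ρ w *ᵥ Pi.single i 1) := by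
  rw [cs.simple_mul_simple_mul_simple_of_M_eq_three (hρ.M_eq_three hij),
    hρ.mulVec_mul_longest_single_left hij.symm]

theorem length_mul_longest (hρ : cs.IsGeometricRepresentation ρ) {i j : B} (hij : i ≠ j)
    {w : W} (hwi : ¬cs.IsRightDescent w i) (hwj : ¬cs.IsRightDescent w j) :
    ℓ (w * (s i * s j * s i)) = ℓ w + 3 := by
  have hw := hρ.not_isRightDescent_iff.mp hwi
  have hw' := hρ.not_isRightDescent_iff.mp hwj
  have h₁ : ¬cs.IsRightDescent (w * s i) j := by
    rw [hρ.not_isRightDescent_iff, mulVec_map_mul_simple, hρ.mulVec_single_of_ne hij,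
      Matrix.mulVec_add]
    exact add_nonneg hw' hw
  have h₂ : ¬cs.IsRightDescent (w * s i * s j) i := by
    rwa [hρ.not_isRightDescent_iff, mulVec_map_mul_simple, mulVec_map_mul_simple,
      hρ.mulVec_single_of_ne hij.symm, Matrix.mulVec_add, hρ.mulVec_single_self,
      hρ.mulVec_single_of_ne hij, ← add_assoc, neg_add_cancel_comm]
  rw [← mul_assoc, ← mul_assoc, cs.not_isRightDescent_iff.mp h₂,
    cs.not_isRightDescent_iff.mp h₁, cs.not_isRightDescent_iff.mp hwi]

theorem lengthSeries_isRightDescent_and (hρ : cs.IsGeometricRepresentation ρ) {i j : B}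
    (hij : i ≠ j) :
    cs.lengthSeries (fun w => cs.IsRightDescent w i ∧ cs.IsRightDescent w j) =
      X ^ 3 * cs.lengthSeries fun w => ¬cs.IsRightDescent w i ∧ ¬cs.IsRightDescent w j := by
  have hu : s i * s j * s i * (s i * s j * s i) = 1 := by
    simp [mul_assoc, cs.simple_mul_simple_cancel_left]
  refine cs.lengthSeries_eq_X_pow_mul hu 3 (fun v ⟨hvi, hvj⟩ => ⟨⟨?_, ?_⟩, ?_⟩)
    (fun w ⟨hwi, hwj⟩ => ⟨?_, ?_⟩)
  · rw [hρ.isRightDescent_iff, hρ.mulVec_mul_longest_single_left hij, neg_nonpos]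
    exact hρ.nonneg_of_not_isRightDescent hvj
  · rw [hρ.isRightDescent_iff, hρ.mulVec_mul_longest_single_right hij, neg_nonpos]
    exact hρ.nonneg_of_not_isRightDescent hvi
  · exact hρ.length_mul_longest hij hvi hvj
  · rw [hρ.not_isRightDescent_iff, hρ.mulVec_mul_longest_single_left hij, neg_nonneg]
    exact hρ.isRightDescent_iff.mp hwj
  · rw [hρ.not_isRightDescent_iff, hρ.mulVec_mul_longest_single_right hij, neg_nonneg]
    exact hρ.isRightDescent_iff.mp hwi

theorem lengthSeries_true_eq_mul (hρ : cs.IsGeometricRepresentation ρ) {i j : B} (hij : i ≠ j) :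
    cs.lengthSeries (fun _ => True) = (1 + X) * (1 + X + X ^ 2) *
      cs.lengthSeries fun w => ¬cs.IsRightDescent w i ∧ ¬cs.IsRightDescent w j := by
  have hX : (1 + X : ℤ⟦X⟧) ≠ 0 := fun h => by simpa using congrArg constantCoeff h
  have hX' : (1 - X : ℤ⟦X⟧) ≠ 0 := fun h => by simpa using congrArg constantCoeff h
  have hA := cs.one_add_X_mul_lengthSeries_not_isRightDescent
  have hAij : cs.lengthSeries (¬cs.IsRightDescent · i) =
      cs.lengthSeries (¬cs.IsRightDescent · j) :=
    mul_left_cancel₀ hX ((hA i).trans (hA j).symm)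
  have hi := cs.lengthSeries_and_add_and_not (¬cs.IsRightDescent · i) (¬cs.IsRightDescent · j)
  have hj := cs.lengthSeries_and_add_and_not (cs.IsRightDescent · j) (cs.IsRightDescent · i)
  rw [hρ.lengthSeries_isRightDescent_and hij.symm, lengthSeries_isRightDescent] at hj
  simp only [not_not, and_comm (a := ¬cs.IsRightDescent _ j),
    and_comm (a := cs.IsRightDescent _ j)] at hi hj
  have h : (1 - X) * cs.lengthSeries (¬cs.IsRightDescent · i) = (1 - X) * ((1 + X + X ^ 2) *
      cs.lengthSeries fun w => ¬cs.IsRightDescent w i ∧ ¬cs.IsRightDescent w j) := by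
    linear_combination hj - hi - X * hAij
  rw [← hA i, mul_left_cancel₀ hX' h, mul_assoc]

/-- `(-1)ᵐ t^{ℓ(w_J)} (1 + t)(1 + t + t²) / W_J(t)` for `m = |J|`: the parabolic subgroup `W_J` is
trivial, of type `A₁` or of type `A₂` with longest element `w_J` for `m ≤ 2`, and infinite for
`m ≥ 3`. -/
noncomputable def parabolicWeight : ℕ → ℤ⟦X⟧
  | 0 => (1 + X) * (1 + X + X ^ 2)
  | 1 => -(X * (1 + X + X ^ 2))
  | 2 => X ^ 3
  | _ + 3 => 0

theorem sum_range_choose_smul_parabolicWeight (n : ℕ) :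
    ∑ m ∈ range (n + 1), n.choose m • parabolicWeight m =
      (1 + X) * (1 + X + X ^ 2) - (n : ℤ⟦X⟧) * X * (1 + X + X ^ 2) +
        (n.choose 2 : ℤ⟦X⟧) * X ^ 3 := by
  have h₁ : ∑ m ∈ range (n + 1), n.choose m • parabolicWeight m =
      ∑ m ∈ range (n + 3), n.choose m • parabolicWeight m :=
    sum_subset (range_subset_range.2 (by omega)) fun m _ hm => by
      rw [Nat.choose_eq_zero_of_lt (by simpa using hm), zero_smul]
  have h₂ : ∑ m ∈ range 3, n.choose m • parabolicWeight m =
      ∑ m ∈ range (n + 3), n.choose m • parabolicWeight m :=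
    sum_subset (range_subset_range.2 (by omega)) fun m _ hm => by
      obtain ⟨k, rfl⟩ : ∃ k, m = k + 3 := ⟨m - 3, by simp at hm; omega⟩
      rw [parabolicWeight, smul_zero]
  rw [h₁, ← h₂]
  simp only [sum_range_succ, range_one, sum_singleton, parabolicWeight, nsmul_eq_mul,
    Nat.choose_zero_right, Nat.choose_one_right, Nat.cast_one]
  ring

theorem mul_neg_one_pow_smul_lengthSeries (hρ : cs.IsGeometricRepresentation ρ) (J : Finset B) :
    (1 + X) * (1 + X + X ^ 2) *
        ((-1 : ℤ) ^ #J • cs.lengthSeries fun w => ∀ i ∈ J, cs.IsRightDescent w i) =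
      parabolicWeight #J * cs.lengthSeries fun _ => True := by
  match h : #J with
  | 0 =>
    simp [card_eq_zero.mp h, parabolicWeight]
  | 1 =>
    obtain ⟨i, rfl⟩ := card_eq_one.mp h
    simp only [mem_singleton, forall_eq, lengthSeries_isRightDescent,
      ← cs.one_add_X_mul_lengthSeries_not_isRightDescent i, parabolicWeight]
    simp only [pow_one, neg_smul, one_smul]
    ring
  | 2 =>
    obtain ⟨i, j, hij, rfl⟩ := card_eq_two.mp h
    simp only [mem_insert, mem_singleton, forall_eq_or_imp, forall_eq,
      hρ.lengthSeries_isRightDescent_and hij, hρ.lengthSeries_true_eq_mul hij, parabolicWeight]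
    simp only [even_two, Even.neg_pow, one_pow, one_smul]
    ring
  | n + 3 =>
    rw [cs.lengthSeries_eq_zero (hρ.not_forall_isRightDescent (by omega)), parabolicWeight]
    simp

theorem mul_lengthSeries_true (hρ : cs.IsGeometricRepresentation ρ) :
    ((1 + X) * (1 + X + X ^ 2) - (Fintype.card B : ℤ⟦X⟧) * X * (1 + X + X ^ 2) +
        ((Fintype.card B).choose 2 : ℤ⟦X⟧) * X ^ 3) * cs.lengthSeries (fun _ => True) =
      (1 + X) * (1 + X + X ^ 2) := by
  calc _ = ∑ m ∈ range (#(univ : Finset B) + 1),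
        (#(univ : Finset B)).choose m • (parabolicWeight m * cs.lengthSeries fun _ => True) := by
        rw [card_univ, ← sum_range_choose_smul_parabolicWeight, sum_mul]
        simp only [smul_mul_assoc]
    _ = ∑ J ∈ univ.powerset, parabolicWeight #J * cs.lengthSeries fun _ => True :=
        (sum_powerset_apply_card _).symm
    _ = ∑ J ∈ univ.powerset, (1 + X) * (1 + X + X ^ 2) *
          ((-1 : ℤ) ^ #J • cs.lengthSeries fun w => ∀ i ∈ J, cs.IsRightDescent w i) := by
        simp only [hρ.mul_neg_one_pow_smul_lengthSeries]
    _ = (1 + X) * (1 + X + X ^ 2) := by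
        rw [← mul_sum, cs.sum_powerset_neg_one_pow_smul_lengthSeries, mul_one]

end IsGeometricRepresentation

end CoxeterSystem

def reflection18 (i : Fin 4) : Matrix (Fin 4) (Fin 4) ℤ :=
  (Matrix.of fun c => if c = i then -Pi.single i 1 else Pi.single c 1 + Pi.single i 1)ᵀ

theorem isLiftable_reflection18 : cox18.IsLiftable reflection18 := by
  unfold CoxeterMatrix.IsLiftable
  decide

theorem isGeometricRepresentation_reflection18 :
    cox18.toCoxeterSystem.IsGeometricRepresentation
      (cox18.toCoxeterSystem.lift ⟨reflection18, isLiftable_reflection18⟩) where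
  M_eq_three i j h := by
    fin_cases i <;> fin_cases j <;> simp_all [cox18]
  mulVec_single_self i := by
    rw [CoxeterSystem.lift_apply_simple]
    revert i
    decide
  mulVec_single_of_ne i j := by
    rw [CoxeterSystem.lift_apply_simple]
    revert i j
    decide

theorem poincare18_eq_lengthSeries :
    poincare18 = cox18.toCoxeterSystem.lengthSeries fun _ => True := by
  ext k
  rw [poincare18, coeff_mk, CoxeterSystem.coeff_lengthSeries,
    filter_true_of_mem fun _ _ => trivial, ← Nat.card_eq_card_finite_toFinset]
  rfl

theorem stmt_18 :
    (1 - 2 * X - 2 * X ^ 2 + 3 * X ^ 3) * poincare18 =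
      (1 + X) * (1 + X + X ^ 2) := by
  have h := isGeometricRepresentation_reflection18.mul_lengthSeries_true
  simp only [Fintype.card_fin] at h
  rw [poincare18_eq_lengthSeries, ← h]
  congr 1
  norm_num [Nat.choose]
  ring
end
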